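/- arXiv:2601.01858 — 7 statements merged into one kernel-verified Lean document; each statement's English description precedes it below -/
import Mathlib

section
/- Let Ψ = (ρ₁,…,ρ_N) and Ψ′ = (ρ′₁,…,ρ′_N) be two N-tuples of density matrices on ℂ^d. There exists a unitary d×d matrix U with ρ′_k = U ρ_k U† for all k = 1,…,N if and only if for every integer n ≥ 1 and every sequence i₁,…,iₙ of indices from {1,…,N}, the corresponding Bargmann invariants agree: Tr(ρ_{i₁} ρ_{i₂} ⋯ ρ_{iₙ}) = Tr(ρ′_{i₁} ρ′_{i₂} ⋯ ρ′_{iₙ}). -/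
/-!
Put `ρ_k ⊕ ρ'_k` into the unital *-algebra `B ⊆ M_{2d}` they generate. The projections `P`, `Q`
onto the two summands lie in the commutant `B′`, and equality of all Bargmann invariants says
exactly that `tr (b P) = tr (b Q)` for every `b ∈ B`. By the double commutant theorem `B″ = B`,
this forces `P` and `Q` to be Murray–von Neumann equivalent in `B′`: some `v ∈ B′` has
`v⋆ v = P` and `v v⋆ = Q`. The block of `v` mapping the first summand to the second is a unitary
intertwining `ρ` with `ρ'`.
-/

open scoped ComplexOrder

/-- A density matrix on `ℂ^d`: positive semidefinite with trace 1. -/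
def IsDensityMatrix {d : ℕ} (ρ : Matrix (Fin d) (Fin d) ℂ) : Prop :=
  ρ.PosSemidef ∧ ρ.trace = 1

open scoped Kronecker

section StarRing

variable {R : Type*} [Ring R] [StarRing R] {p t v w : R}

theorem IsStarProjection.commute_of_mul_mul_eq (hp : IsStarProjection p)
    (ht : p * t * p = t * p) (hts : p * star t * p = star t * p) : Commute p t := by
  have : p * t * p = p * t := by
    simpa [hp.isSelfAdjoint.star_eq, mul_assoc] using congr(star $hts)
  exact this.symm.trans ht

theorem isStarProjection_mul_star_self (hv : v * (star v * v) = v) :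
    IsStarProjection (v * star v) where
  isIdempotentElem := by rw [IsIdempotentElem, ← mul_assoc, mul_assoc v, hv]
  isSelfAdjoint := by rw [IsSelfAdjoint, star_mul, star_star]

theorem star_add_mul_add_of_orthogonal (hv : v * (star v * v) = v) (hw : w * (star w * w) = w)
    (hsrc : star v * v * (star w * w) = 0) (htgt : v * star v * (w * star w) = 0) :
    star (v + w) * (v + w) = star v * v + star w * w ∧
      (v + w) * star (v + w) = v * star v + w * star w := by
  have h₁ : star v * w = 0 := calc
    star v * w = star (v * (star v * v)) * (w * (star w * w)) := by rw [hv, hw]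
    _ = star v * (v * star v * (w * star w)) * w := by simp only [star_mul, star_star, mul_assoc]
    _ = 0 := by rw [htgt, mul_zero, zero_mul]
  have h₂ : v * star w = 0 := calc
    v * star w = v * (star v * v) * star (w * (star w * w)) := by rw [hv, hw]
    _ = v * (star v * v * (star w * w)) * star w := by simp only [star_mul, star_star, mul_assoc]
    _ = 0 := by rw [hsrc, mul_zero, zero_mul]
  have h₃ : star w * v = 0 := by simpa using congr(star $h₁)
  have h₄ : w * star v = 0 := by simpa using congr(star $h₂)
  constructor <;> simp only [star_add, add_mul, mul_add, h₁, h₂, h₃, h₄, add_zero, zero_add]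

end StarRing

section StarAlgebra

variable {R A : Type*} [CommSemiring R] [StarRing R] [Semiring A] [StarRing A] [Algebra R A]
  [StarModule R A]

theorem StarSubalgebra.mem_centralizer_adjoin {s : Set A} {z : A}
    (hz : z ∈ StarSubalgebra.centralizer R s) :
    z ∈ StarSubalgebra.centralizer R (StarAlgebra.adjoin R s : Set A) := by
  have hcomm {g} (hg : g ∈ StarAlgebra.adjoin R s) : g * z = z * g :=
    ((mem_centralizer_iff R).mp (StarAlgebra.adjoin_le_centralizer_centralizer R s hg) z hz).1.symm
  exact (mem_centralizer_iff R).mpr fun g hg => ⟨hcomm hg, hcomm (star_mem hg)⟩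

theorem StarAlgebra.adjoin_range_le_span_list_prod {κ : Type*} {f : κ → A}
    (hf : ∀ k, IsSelfAdjoint (f k)) :
    Subalgebra.toSubmodule (StarAlgebra.adjoin R (Set.range f)).toSubalgebra ≤
      Submodule.span R (Set.range fun l : List κ => (l.map f).prod) := by
  have hstar : star (Set.range f) ⊆ Set.range f := by
    rintro x ⟨k, hk⟩
    exact ⟨k, by rw [(hf k).star_eq.symm, hk, star_star]⟩
  rw [StarAlgebra.adjoin_eq_span, Set.union_eq_left.mpr hstar, ← FreeMonoid.mrange_lift]
  refine Submodule.span_mono ?_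
  rintro _ ⟨w, rfl⟩
  exact ⟨w.toList, (FreeMonoid.lift_apply f w).symm⟩

end StarAlgebra

namespace Matrix

section CommRing

variable {R m n : Type*} [CommRing R] [Fintype n]

theorem mulVecLin_injective : Function.Injective (mulVecLin : Matrix m n R → _) :=
  fun _ _ h => mulVec_injective congr(⇑$h)

variable [DecidableEq n]

theorem _root_.IsIdempotentElem.mulVecLin {p : Matrix n n R} (hp : IsIdempotentElem p) :
    IsIdempotentElem p.mulVecLin :=
  hp.map Matrix.toLinAlgEquiv'

theorem mul_mul_eq_of_mem_invtSubmodule {p t : Matrix n n R} (hp : IsIdempotentElem p)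
    (ht : LinearMap.range p.mulVecLin ∈ Module.End.invtSubmodule t.mulVecLin) :
    p * t * p = t * p := by
  have h := LinearMap.IsIdempotentElem.conj_eq_of_range_mem_invtSubmodule hp.mulVecLin ht
  rw [← mulVecLin_mul, ← mulVecLin_mul, ← Matrix.mul_assoc] at h
  exact mulVecLin_injective h

theorem list_prod_map_fromBlocks {κ : Type*} [Fintype m] [DecidableEq m]
    (A : κ → Matrix m m R) (D : κ → Matrix n n R) (l : List κ) :
    (l.map fun k => fromBlocks (A k) 0 0 (D k)).prod =
      fromBlocks (l.map A).prod 0 0 (l.map D).prod := by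
  induction l with
  | nil => simp [fromBlocks_one]
  | cons k l ih => simp [ih, fromBlocks_multiply]

end CommRing

theorem _root_.IsIdempotentElem.trace_eq_rank {K n : Type*} [Field K] [Fintype n] [DecidableEq n]
    {p : Matrix n n K} (hp : IsIdempotentElem p) : p.trace = p.rank := by
  rw [← trace_toLin'_eq, toLin'_apply',
    (LinearMap.IsIdempotentElem.isProj_range _ hp.mulVecLin).trace]
  rfl

open StarSubalgebra

variable {𝕜 n : Type*} [RCLike 𝕜] [Fintype n]

theorem _root_.IsStarProjection.trace_eq_zero_iff {p : Matrix n n 𝕜} (hp : IsStarProjection p) :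
    p.trace = 0 ↔ p = 0 := by
  have : p.trace = (star p * p).trace := by rw [hp.isSelfAdjoint.star_eq, hp.isIdempotentElem.eq]
  rw [this, star_eq_conjTranspose, trace_conjTranspose_mul_self_eq_zero_iff]

variable [DecidableEq n]

theorem mul_star_mul_self_eq_self {v : Matrix n n 𝕜} (hv : IsIdempotentElem (star v * v)) :
    v * (star v * v) = v := by
  have h : star (v * (star v * v) - v) * (v * (star v * v) - v) = 0 := calc
    _ = star v * v * (star v * v) * (star v * v) - star v * v * (star v * v)
          - star v * v * (star v * v) + star v * v := by
      simp only [star_sub, star_mul, star_star]; noncomm_ring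
    _ = 0 := by rw [hv.eq, hv.eq, sub_self, zero_sub, neg_add_cancel]
  rw [star_eq_conjTranspose, conjTranspose_mul_self_eq_zero, sub_eq_zero] at h
  exact h

theorem exists_isStarProjection_range_eq (W : Submodule 𝕜 (n → 𝕜)) :
    ∃ p : Matrix n n 𝕜, IsStarProjection p ∧ LinearMap.range p.mulVecLin = W := by
  let K : Submodule 𝕜 (EuclideanSpace 𝕜 n) :=
    W.comap (WithLp.linearEquiv 2 𝕜 (n → 𝕜)).toLinearMap
  let e := (toEuclideanCLM (n := n) (𝕜 := 𝕜)).symm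
  have hmul (y : n → 𝕜) :
      e K.starProjection *ᵥ y = WithLp.ofLp (K.starProjection (WithLp.toLp 2 y)) := by
    conv_rhs => rw [← StarAlgEquiv.apply_symm_apply toEuclideanCLM K.starProjection]
    rfl
  refine ⟨e K.starProjection, isStarProjection_starProjection.map e, ?_⟩
  ext x
  simp only [LinearMap.mem_range, mulVecLin_apply, hmul]
  refine ⟨?_, fun hx => ⟨x, by rw [K.starProjection_eq_self_iff.mpr hx]⟩⟩
  rintro ⟨y, rfl⟩
  exact K.starProjection_apply_mem (WithLp.toLp 2 y)

theorem exists_isStarProjection_mem_centralizer {S : Set (Matrix n n 𝕜)}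
    (W : Submodule 𝕜 (n → 𝕜)) (hW : ∀ s ∈ S, W ∈ Module.End.invtSubmodule s.mulVecLin)
    (hW' : ∀ s ∈ S, W ∈ Module.End.invtSubmodule (star s).mulVecLin) :
    ∃ p ∈ centralizer 𝕜 S, IsStarProjection p ∧
      LinearMap.range p.mulVecLin = W := by
  obtain ⟨p, hp, rfl⟩ := exists_isStarProjection_range_eq W
  have hcomm {t : Matrix n n 𝕜}
      (ht : LinearMap.range p.mulVecLin ∈ Module.End.invtSubmodule t.mulVecLin)
      (hts : LinearMap.range p.mulVecLin ∈ Module.End.invtSubmodule (star t).mulVecLin) :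
      t * p = p * t :=
    (hp.commute_of_mul_mul_eq (mul_mul_eq_of_mem_invtSubmodule hp.isIdempotentElem ht)
      (mul_mul_eq_of_mem_invtSubmodule hp.isIdempotentElem hts)).eq.symm
  refine ⟨p, (mem_centralizer_iff 𝕜).mpr fun s hs => ⟨?_, ?_⟩, hp, rfl⟩
  · exact hcomm (hW s hs) (hW' s hs)
  · exact hcomm (hW' s hs) (by rw [star_star]; exact hW s hs)

theorem commute_one_kronecker_iff {R : Matrix (n × n) (n × n) 𝕜} {b : Matrix n n 𝕜} :
    Commute R ((1 : Matrix n n 𝕜) ⊗ₖ b) ↔ ∀ j l, Commute (of fun i k => R (j, i) (l, k)) b := by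
  have hmul (j l i k) : (R * ((1 : Matrix n n 𝕜) ⊗ₖ b)) (j, i) (l, k) =
      ((of fun i k => R (j, i) (l, k)) * b) i k := by
    simp [mul_apply, Fintype.sum_prod_type, one_apply]
  have hmul' (j l i k) : (((1 : Matrix n n 𝕜) ⊗ₖ b) * R) (j, i) (l, k) =
      (b * (of fun i k => R (j, i) (l, k))) i k := by
    simp [mul_apply, Fintype.sum_prod_type, one_apply]
  refine ⟨fun h j l => ext fun i k => ?_, fun h => ext fun ⟨j, i⟩ ⟨l, k⟩ => ?_⟩
  · rw [← hmul, ← hmul', h.eq]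
  · rw [hmul, hmul', (h j l).eq]

theorem centralizer_centralizer (B : StarSubalgebra 𝕜 (Matrix n n 𝕜)) :
    centralizer 𝕜 (centralizer 𝕜 (B : Set (Matrix n n 𝕜)) :
      Set (Matrix n n 𝕜)) = B := by
  refine le_antisymm (fun x hx => ?_) ?_
  swap
  · simpa using StarAlgebra.adjoin_le_centralizer_centralizer 𝕜 (B : Set (Matrix n n 𝕜))
  let vecₗ : Matrix n n 𝕜 →ₗ[𝕜] n × n → 𝕜 :=
    { toFun := vec, map_add' := vec_add, map_smul' := vec_smul }
  let W := (Subalgebra.toSubmodule B.toSubalgebra).map vecₗ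
  have hW (b : Matrix n n 𝕜) (hb : b ∈ B) :
      W ∈ Module.End.invtSubmodule ((1 : Matrix n n 𝕜) ⊗ₖ b).mulVecLin := by
    rw [Module.End.mem_invtSubmodule_iff_forall_mem_of_mem]
    rintro _ ⟨a, ha, rfl⟩
    exact ⟨b * a, show b * a ∈ B from mul_mem hb ha, vec_mul_eq_mulVec b a⟩
  obtain ⟨R, hRc, hR, hRW⟩ := exists_isStarProjection_mem_centralizer
    (S := (fun b => (1 : Matrix n n 𝕜) ⊗ₖ b) '' B) W
    (by rintro _ ⟨b, hb, rfl⟩; exact hW b hb)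
    (by
      rintro _ ⟨b, hb, rfl⟩
      simpa [star_eq_conjTranspose, conjTranspose_kronecker] using hW _ (star_mem hb))
  -- `R` projects onto `vec B` and commutes with `1 ⊗ₖ B`, so its blocks lie in `B′`.
  have hRx : Commute R ((1 : Matrix n n 𝕜) ⊗ₖ x) := by
    refine commute_one_kronecker_iff.mpr fun j l => ?_
    have hblock {b} (hb : b ∈ B) : Commute (of fun i k => R (j, i) (l, k)) b :=
      commute_one_kronecker_iff.mp ((mem_centralizer_iff 𝕜).mp hRc _
        ⟨b, hb, rfl⟩).1.symm j l
    exact ((mem_centralizer_iff 𝕜).mp hx _ <|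
      (mem_centralizer_iff 𝕜).mpr fun b hb =>
        ⟨(hblock hb).eq.symm, (hblock (star_mem hb)).eq.symm⟩).1
  have hvec : vec x ∈ W := by
    have h1 : vec 1 ∈ LinearMap.range R.mulVecLin := hRW ▸ ⟨1, one_mem B, rfl⟩
    rw [← hRW, ← Matrix.mul_one x, vec_mul_eq_mulVec,
      ← (LinearMap.IsIdempotentElem.mem_range_iff hR.isIdempotentElem.mulVecLin).mp h1,
      mulVecLin_apply, mulVec_mulVec, ← hRx.eq, ← mulVec_mulVec]
    exact LinearMap.mem_range_self R.mulVecLin _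
  obtain ⟨a, ha, hax⟩ := hvec
  exact vec_inj.mp hax ▸ ha

theorem exists_isStarProjection_mul_eq_smul {S : Set (Matrix n n 𝕜)} {h : Matrix n n 𝕜}
    (hhS : h ∈ centralizer 𝕜 S) (hh : h.PosSemidef) (hh0 : h ≠ 0) :
    ∃ e ∈ centralizer 𝕜 S, IsStarProjection e ∧ e ≠ 0 ∧
      ∃ r : ℝ, 0 < r ∧ h * e = (r : 𝕜) • e := by
  obtain ⟨i, hi⟩ : ∃ i, hh.isHermitian.eigenvalues i ≠ 0 := by
    by_contra! hall
    exact hh0 (hh.isHermitian.eigenvalues_eq_zero_iff.mp (funext hall))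
  set r := hh.isHermitian.eigenvalues i
  let W := Module.End.eigenspace h.mulVecLin (r : 𝕜)
  have hW {s : Matrix n n 𝕜} (hs : s * h = h * s) :
      W ∈ Module.End.invtSubmodule s.mulVecLin := by
    rw [Module.End.mem_invtSubmodule_iff_mapsTo]
    refine Module.End.mapsTo_genEigenspace_of_comm ?_ _ _
    rw [Commute, SemiconjBy, Module.End.mul_eq_comp, Module.End.mul_eq_comp, ← mulVecLin_mul,
      ← mulVecLin_mul, hs]
  obtain ⟨e, he, hep, heW⟩ := exists_isStarProjection_mem_centralizer W
    (fun s hs => hW ((mem_centralizer_iff 𝕜).mp hhS s hs).1)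
    (fun s hs => hW ((mem_centralizer_iff 𝕜).mp hhS s hs).2)
  refine ⟨e, he, hep, ?_, r, (hh.eigenvalues_nonneg i).lt_of_ne' hi, ?_⟩
  · rintro rfl
    have hv : ⇑(hh.isHermitian.eigenvectorBasis i) ∈ W := by
      rw [Module.End.mem_eigenspace_iff, mulVecLin_apply,
        hh.isHermitian.mulVec_eigenvectorBasis i, RCLike.real_smul_eq_coe_smul (K := 𝕜)]
    rw [← heW, mulVecLin_zero, LinearMap.range_zero, Submodule.mem_bot] at hv
    exact hh.isHermitian.eigenvectorBasis.orthonormal.ne_zero i (by simpa using hv)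
  · refine mulVec_injective (funext fun y => ?_)
    rw [← mulVec_mulVec, smul_mulVec]
    exact Module.End.mem_eigenspace_iff.mp (heW ▸ LinearMap.mem_range_self e.mulVecLin y)

section MurrayVonNeumann

variable {B : StarSubalgebra 𝕜 (Matrix n n 𝕜)}

theorem exists_mem_centralizer_mul_mul_ne_zero {P Q : Matrix n n 𝕜} (hP : IsStarProjection P)
    (htr : ∀ b ∈ B, (b * P).trace = (b * Q).trace) (hP0 : P ≠ 0) :
    ∃ c ∈ centralizer 𝕜 (B : Set (Matrix n n 𝕜)), Q * c * P ≠ 0 := by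
  by_contra! hQP
  -- The projection `R` onto the `B′`-module generated by `range P` then lies in `B″ = B`,
  -- fixes `P` and is killed by `Q`, so `tr P = tr (R P) = tr (R Q) = 0`.
  set C := centralizer 𝕜 (B : Set (Matrix n n 𝕜))
  let W := ⨆ c ∈ C, LinearMap.range (c * P).mulVecLin
  have hW {t} (ht : t ∈ C) : W ∈ Module.End.invtSubmodule t.mulVecLin := by
    simp only [Module.End.mem_invtSubmodule_iff_map_le, W, Submodule.map_iSup]
    refine iSup₂_le fun c hc => ?_
    rw [← LinearMap.range_comp, ← mulVecLin_mul, ← Matrix.mul_assoc]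
    exact le_iSup₂_of_le (t * c) (mul_mem ht hc) le_rfl
  obtain ⟨R, hRC, hR, hRW⟩ := exists_isStarProjection_mem_centralizer W (fun t ht => hW ht)
    (fun t ht => hW (star_mem ht))
  have hRB : R ∈ B := centralizer_centralizer B ▸ hRC
  have hRP : R * P = P := by
    refine mulVecLin_injective ?_
    rw [mulVecLin_mul,
      LinearMap.IsIdempotentElem.comp_eq_right_iff hR.isIdempotentElem.mulVecLin, hRW]
    exact le_iSup₂_of_le (1 : Matrix n n 𝕜) (one_mem C) (by rw [Matrix.one_mul])
  have hQR : Q * R = 0 := by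
    refine mulVecLin_injective ?_
    rw [mulVecLin_mul, mulVecLin_zero, ← LinearMap.range_le_ker_iff, hRW]
    refine iSup₂_le fun c hc => LinearMap.range_le_ker_iff.mpr ?_
    rw [← mulVecLin_mul, ← Matrix.mul_assoc, hQP c hc, mulVecLin_zero]
  refine hP0 (hP.trace_eq_zero_iff.mp ?_)
  rw [← hRP, htr R hRB, trace_mul_comm, hQR, trace_zero]

theorem exists_partialIsometry_of_mul_mul_ne_zero {P Q c : Matrix n n 𝕜}
    (hP : IsStarProjection P) (hQ : IsStarProjection Q)
    (hPB : P ∈ centralizer 𝕜 (B : Set (Matrix n n 𝕜)))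
    (hQB : Q ∈ centralizer 𝕜 (B : Set (Matrix n n 𝕜)))
    (hcB : c ∈ centralizer 𝕜 (B : Set (Matrix n n 𝕜))) (hQcP : Q * c * P ≠ 0) :
    ∃ v ∈ centralizer 𝕜 (B : Set (Matrix n n 𝕜)), v ≠ 0 ∧ Q * v * P = v ∧
      IsStarProjection (star v * v) := by
  set c₀ := Q * c * P
  have hQc₀ : Q * c₀ = c₀ := by simp only [c₀, ← Matrix.mul_assoc, hQ.isIdempotentElem.eq]
  have hc₀B : c₀ ∈ centralizer 𝕜 (B : Set (Matrix n n 𝕜)) := mul_mem (mul_mem hQB hcB) hPB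
  have hh : (star c₀ * c₀).PosSemidef := posSemidef_conjTranspose_mul_self c₀
  have hh0 : star c₀ * c₀ ≠ 0 := by
    rwa [star_eq_conjTranspose, Ne, conjTranspose_mul_self_eq_zero]
  obtain ⟨e, heB, he, he0, r, hr, hhe⟩ :=
    exists_isStarProjection_mul_eq_smul (mul_mem (star_mem hc₀B) hc₀B) hh hh0
  have hPc₀ : P * star c₀ = star c₀ := by
    simp only [c₀, star_mul, hP.isSelfAdjoint.star_eq, ← Matrix.mul_assoc, hP.isIdempotentElem.eq]
  have hPe : P * e = e := by
    have hr0 : (r : 𝕜) ≠ 0 := RCLike.ofReal_ne_zero.mpr hr.ne'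
    refine smul_right_injective _ hr0 (show (r : 𝕜) • (P * e) = (r : 𝕜) • e from ?_)
    rw [← Matrix.mul_smul, ← hhe, ← Matrix.mul_assoc, ← Matrix.mul_assoc, hPc₀]
  have heP : e * P = e := by
    simpa [he.isSelfAdjoint.star_eq, hP.isSelfAdjoint.star_eq] using congr(star $hPe)
  -- `c₀` cut down to an eigenspace of `c₀⋆ c₀` and normalised is a partial isometry.
  set v := ((Real.sqrt r)⁻¹ : 𝕜) • (c₀ * e)
  have hv : star v * v = e := by
    have hs : star ((√r : 𝕜)⁻¹) = (√r : 𝕜)⁻¹ := by simp [RCLike.star_def]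
    have hscal : (√r : 𝕜)⁻¹ * (√r : 𝕜)⁻¹ * r = 1 := by
      rw [← mul_inv, ← RCLike.ofReal_mul, Real.mul_self_sqrt hr.le,
        inv_mul_cancel₀ (RCLike.ofReal_ne_zero.mpr hr.ne')]
    have hehe : e * star c₀ * (c₀ * e) = (r : 𝕜) • e := by
      rw [← Matrix.mul_assoc, Matrix.mul_assoc e (star c₀) c₀, Matrix.mul_assoc, hhe,
        Matrix.mul_smul, he.isIdempotentElem.eq]
    simp only [v, star_smul, star_mul, he.isSelfAdjoint.star_eq, Matrix.smul_mul, Matrix.mul_smul]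
    rw [hs, hehe, smul_smul, smul_smul, hscal, one_smul]
  refine ⟨v, SMulMemClass.smul_mem _ (mul_mem hc₀B heB), ?_, ?_, hv ▸ he⟩
  · rintro hv0
    rw [hv0, star_zero, zero_mul] at hv
    exact he0 hv.symm
  · simp only [v, Matrix.mul_smul, Matrix.smul_mul, ← Matrix.mul_assoc, hQc₀]
    rw [Matrix.mul_assoc, heP]

theorem rank_sub_lt_rank {p q : Matrix n n 𝕜} (hp : IsStarProjection p)
    (hq : IsIdempotentElem q) (hqp : IsIdempotentElem (q - p)) (hp0 : p ≠ 0) : (q - p).rank < q.rank := by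
  have hsum : (q - p).rank + p.rank = q.rank := by
    have : ((q - p).rank + p.rank : 𝕜) = q.rank := by
      rw [← hqp.trace_eq_rank, ← hp.isIdempotentElem.trace_eq_rank, ← hq.trace_eq_rank,
        trace_sub, sub_add_cancel]
    exact_mod_cast this
  have hp0' : p.rank ≠ 0 := by
    rwa [Ne, ← Nat.cast_eq_zero (R := 𝕜), ← hp.isIdempotentElem.trace_eq_rank,
      hp.trace_eq_zero_iff]
  omega

theorem exists_mem_centralizer_star_mul_self_eq {P Q : Matrix n n 𝕜}
    (hP : IsStarProjection P) (hQ : IsStarProjection Q)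
    (hPB : P ∈ centralizer 𝕜 (B : Set (Matrix n n 𝕜)))
    (hQB : Q ∈ centralizer 𝕜 (B : Set (Matrix n n 𝕜)))
    (htr : ∀ b ∈ B, (b * P).trace = (b * Q).trace) :
    ∃ v ∈ centralizer 𝕜 (B : Set (Matrix n n 𝕜)), star v * v = P ∧ v * star v = Q := by
  induction hk : P.rank using Nat.strong_induction_on generalizing P Q with
  | _ k ih =>
  by_cases hP0 : P = 0
  · subst hP0
    have hQ0 : Q = 0 := hQ.trace_eq_zero_iff.mp (by simpa using (htr 1 (one_mem B)).symm)
    exact ⟨0, zero_mem _, by simp, by simp [hQ0]⟩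
  -- Split off a partial isometry `v` from under `P` to under `Q`, then recurse on the rest.
  obtain ⟨c, hcB, hc⟩ := exists_mem_centralizer_mul_mul_ne_zero hP htr hP0
  obtain ⟨v, hvB, hv0, hQvP, he⟩ :=
    exists_partialIsometry_of_mul_mul_ne_zero hP hQ hPB hQB hcB hc
  have hv : v * (star v * v) = v := mul_star_mul_self_eq_self he.isIdempotentElem
  have hf := isStarProjection_mul_star_self hv
  have hvP : v * P = v := by rw [← hQvP, Matrix.mul_assoc, hP.isIdempotentElem.eq]
  have hQv : Q * v = v := by
    rw [← hQvP, ← Matrix.mul_assoc, ← Matrix.mul_assoc, hQ.isIdempotentElem.eq]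
  have hvQ : star v * Q = star v := by simpa [hQ.isSelfAdjoint.star_eq] using congr(star $hQv)
  have hP' := he.sub_of_mul_eq_left hP (by rw [Matrix.mul_assoc, hvP])
  have hQ' := hf.sub_of_mul_eq_left hQ (by rw [Matrix.mul_assoc, hvQ])
  have htr' (b) (hb : b ∈ B) :
      (b * (P - star v * v)).trace = (b * (Q - v * star v)).trace := by
    have hbv : b * v = v * b := ((mem_centralizer_iff 𝕜).mp hvB b hb).1
    have hbv' : (b * (star v * v)).trace = (b * (v * star v)).trace := by
      rw [← Matrix.mul_assoc, trace_mul_comm, ← Matrix.mul_assoc, ← hbv, Matrix.mul_assoc]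
    rw [Matrix.mul_sub, Matrix.mul_sub, trace_sub, trace_sub, htr b hb, hbv']
  have hrank : (P - star v * v).rank < k := hk ▸ rank_sub_lt_rank he hP.isIdempotentElem
    hP'.isIdempotentElem (by rwa [star_eq_conjTranspose, Ne, conjTranspose_mul_self_eq_zero])
  obtain ⟨w, hwB, hw₁, hw₂⟩ := ih _ hrank hP' hQ' (sub_mem hPB (mul_mem (star_mem hvB) hvB))
    (sub_mem hQB (mul_mem hvB (star_mem hvB))) htr' rfl
  have hw : w * (star w * w) = w := mul_star_mul_self_eq_self (hw₁ ▸ hP'.isIdempotentElem)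
  obtain ⟨h₁, h₂⟩ := star_add_mul_add_of_orthogonal hv hw
    (by rw [hw₁, Matrix.mul_sub, he.isIdempotentElem.eq, Matrix.mul_assoc, hvP, sub_self])
    (by rw [hw₂, Matrix.mul_sub, hf.isIdempotentElem.eq, Matrix.mul_assoc, hvQ, sub_self])
  exact ⟨v + w, add_mem hvB hwB, by rw [h₁, hw₁, add_sub_cancel],
    by rw [h₂, hw₂, add_sub_cancel]⟩

end MurrayVonNeumann

theorem exists_mem_unitaryGroup_eq_fromBlocks {v : Matrix (n ⊕ n) (n ⊕ n) 𝕜}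
    (h₁ : star v * v = fromBlocks 1 0 0 0) (h₂ : v * star v = fromBlocks 0 0 0 1) :
    ∃ u ∈ unitaryGroup n 𝕜, v = fromBlocks 0 0 u 0 := by
  have hv : v * (star v * v) = v :=
    mul_star_mul_self_eq_self (by simp [h₁, IsIdempotentElem, fromBlocks_multiply])
  have hvP : v * fromBlocks 1 0 0 0 = v := h₁ ▸ hv
  have hQv : fromBlocks 0 0 0 1 * v = v := by rw [← h₂, Matrix.mul_assoc, hv]
  have hv' : v = fromBlocks 0 0 v.toBlocks₂₁ 0 := by
    conv_lhs => rw [← hvP, ← hQv, ← fromBlocks_toBlocks v]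
    simp [fromBlocks_multiply]
  refine ⟨v.toBlocks₂₁, mem_unitaryGroup_iff.mpr ?_, hv'⟩
  rw [hv'] at h₂
  simpa [star_eq_conjTranspose, fromBlocks_conjTranspose, fromBlocks_multiply] using h₂

theorem trace_mul_fromBlocks_eq_of_mem_adjoin {κ : Type*} {ρ ρ' : κ → Matrix n n 𝕜}
    (hρ : ∀ k, (ρ k).IsHermitian) (hρ' : ∀ k, (ρ' k).IsHermitian)
    (htr : ∀ l : List κ, (l.map ρ).prod.trace = (l.map ρ').prod.trace)
    {b : Matrix (n ⊕ n) (n ⊕ n) 𝕜}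
    (hb : b ∈ StarAlgebra.adjoin 𝕜 (Set.range fun k => fromBlocks (ρ k) 0 0 (ρ' k))) :
    (b * fromBlocks 1 0 0 0).trace = (b * fromBlocks 0 0 0 1).trace := by
  have hg (k) : IsSelfAdjoint (fromBlocks (ρ k) 0 0 (ρ' k)) := (hρ k).fromBlocks (by simp) (hρ' k)
  replace hb := StarAlgebra.adjoin_range_le_span_list_prod hg hb
  induction hb using Submodule.span_induction with
  | mem _ hx =>
    obtain ⟨l, rfl⟩ := hx
    simpa [list_prod_map_fromBlocks, fromBlocks_multiply, trace, Fintype.sum_sum_type] using htr l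
  | zero => simp
  | add x y _ _ hx hy => rw [Matrix.add_mul, Matrix.add_mul, trace_add, trace_add, hx, hy]
  | smul a x _ hx => rw [Matrix.smul_mul, Matrix.smul_mul, trace_smul, trace_smul, hx]

theorem exists_unitary_conj_eq_of_trace_prod_eq {κ : Type*} {ρ ρ' : κ → Matrix n n 𝕜}
    (hρ : ∀ k, (ρ k).IsHermitian) (hρ' : ∀ k, (ρ' k).IsHermitian)
    (htr : ∀ l : List κ, (l.map ρ).prod.trace = (l.map ρ').prod.trace) :
    ∃ U ∈ unitaryGroup n 𝕜, ∀ k, ρ' k = U * ρ k * star U := by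
  let g k := fromBlocks (ρ k) 0 0 (ρ' k)
  let P : Matrix (n ⊕ n) (n ⊕ n) 𝕜 := fromBlocks 1 0 0 0
  let Q : Matrix (n ⊕ n) (n ⊕ n) 𝕜 := fromBlocks 0 0 0 1
  have hP : IsStarProjection P := ⟨by simp [IsIdempotentElem, P, fromBlocks_multiply],
    by simp [IsSelfAdjoint, P, star_eq_conjTranspose, fromBlocks_conjTranspose]⟩
  have hQ : IsStarProjection Q := ⟨by simp [IsIdempotentElem, Q, fromBlocks_multiply],
    by simp [IsSelfAdjoint, Q, star_eq_conjTranspose, fromBlocks_conjTranspose]⟩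
  have hPB : P ∈ centralizer 𝕜 (StarAlgebra.adjoin 𝕜 (Set.range g) : Set _) := by
    refine mem_centralizer_adjoin ((mem_centralizer_iff 𝕜).mpr ?_)
    rintro _ ⟨k, rfl⟩
    simp [g, P, fromBlocks_multiply, star_eq_conjTranspose, fromBlocks_conjTranspose]
  have hQB : Q ∈ centralizer 𝕜 (StarAlgebra.adjoin 𝕜 (Set.range g) : Set _) := by
    refine mem_centralizer_adjoin ((mem_centralizer_iff 𝕜).mpr ?_)
    rintro _ ⟨k, rfl⟩
    simp [g, Q, fromBlocks_multiply, star_eq_conjTranspose, fromBlocks_conjTranspose]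
  obtain ⟨v, hvB, hvP, hvQ⟩ := exists_mem_centralizer_star_mul_self_eq hP hQ hPB hQB
    fun b hb => trace_mul_fromBlocks_eq_of_mem_adjoin hρ hρ' htr hb
  obtain ⟨u, hu, rfl⟩ := exists_mem_unitaryGroup_eq_fromBlocks hvP hvQ
  have hρu (k) : ρ' k * u = u * ρ k := by
    simpa [g, fromBlocks_multiply] using
      ((mem_centralizer_iff 𝕜).mp hvB (g k) (StarAlgebra.subset_adjoin 𝕜 _ ⟨k, rfl⟩)).1
  refine ⟨u, hu, fun k => ?_⟩
  rw [← hρu, Matrix.mul_assoc, mem_unitaryGroup_iff.mp hu, Matrix.mul_one]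

theorem trace_prod_map_conj_eq {κ : Type*} (ρ : κ → Matrix n n 𝕜) {U : Matrix n n 𝕜}
    (hU : U ∈ unitaryGroup n 𝕜) (l : List κ) :
    (l.map fun k => U * ρ k * star U).prod.trace = (l.map ρ).prod.trace := by
  let φ := Unitary.conjStarAlgAut 𝕜 (Matrix n n 𝕜) ⟨U, hU⟩
  have : (l.map fun k => U * ρ k * star U) = (l.map ρ).map φ := by simp [φ]
  rw [this, ← map_list_prod, trace_map']

theorem exists_unitary_conj_eq_iff_trace_prod_eq {κ : Type*} {ρ ρ' : κ → Matrix n n 𝕜}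
    (hρ : ∀ k, (ρ k).IsHermitian) (hρ' : ∀ k, (ρ' k).IsHermitian) :
    (∃ U ∈ unitaryGroup n 𝕜, ∀ k, ρ' k = U * ρ k * star U) ↔
      ∀ l : List κ, (l.map ρ).prod.trace = (l.map ρ').prod.trace := by
  refine ⟨?_, exists_unitary_conj_eq_of_trace_prod_eq hρ hρ'⟩
  rintro ⟨U, hU, hρρ'⟩ l
  rw [show ρ' = fun k => U * ρ k * star U from funext hρρ', trace_prod_map_conj_eq ρ hU l]

end Matrix

/-- Two `N`-tuples of density matrices on `ℂ^d` are jointly unitarily similar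
(`ρ'_k = U ρ_k U†` for a single unitary `U`) iff all their Bargmann invariants agree:
`Tr(ρ_{i₁} ⋯ ρ_{iₙ}) = Tr(ρ'_{i₁} ⋯ ρ'_{iₙ})` for every `n ≥ 1` and indices
`i₁, …, iₙ ∈ {1, …, N}`. -/
theorem joint_unitary_similarity_iff_bargmann {N d : ℕ}
    (ρ ρ' : Fin N → Matrix (Fin d) (Fin d) ℂ)
    (hρ : ∀ k, IsDensityMatrix (ρ k)) (hρ' : ∀ k, IsDensityMatrix (ρ' k)) :
    (∃ U ∈ Matrix.unitaryGroup (Fin d) ℂ, ∀ k, ρ' k = U * ρ k * star U) ↔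
      (∀ n : ℕ, 1 ≤ n → ∀ i : Fin n → Fin N,
        Matrix.trace (List.prod (List.ofFn fun j => ρ (i j))) =
          Matrix.trace (List.prod (List.ofFn fun j => ρ' (i j)))) := by
  rw [Matrix.exists_unitary_conj_eq_iff_trace_prod_eq (fun k => (hρ k).1.isHermitian)
    (fun k => (hρ' k).1.isHermitian)]
  refine ⟨fun h n _ i => by simpa [List.map_ofFn, Function.comp_def] using h (List.ofFn i),
    fun h l => ?_⟩
  cases l with
  | nil => simp
  | cons k l => simpa using h (l.length + 1) (by omega) (k :: l).get
end

section
/- For every integer n ≥ 3, the set ℬ_n|circ := {∏_{k=0}^{n−1} H_{k, (k+1) mod n} : H an n×n positive semidefinite circulant complex matrix with all diagonal entries equal to 1} equals {wⁿ : w ∈ 𝒫_n}, the image of the convex hull of the nth roots of unity under the nth power map. -/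
open scoped ComplexOrder

/-- The circulant matrix of `z ∈ ℂⁿ`: `C(z)_{jk} = z_{(k-j) mod n}`. -/
def circulantMatrix {n : ℕ} (z : Fin n → ℂ) : Matrix (Fin n) (Fin n) ℂ :=
  fun j k => z (k - j)

/-- An `n×n` complex matrix is circulant if it equals `C(z)` for some `z ∈ ℂⁿ`. -/
def IsCirculant {n : ℕ} (H : Matrix (Fin n) (Fin n) ℂ) : Prop :=
  ∃ z : Fin n → ℂ, H = circulantMatrix z

/-- `ω_n = exp(2πi/n)`. -/
noncomputable def primRoot (n : ℕ) : ℂ := Complex.exp (2 * Real.pi * Complex.I / n)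

/-- `𝒫_n`: the convex hull in `ℂ` of the `n`th roots of unity. -/
noncomputable def rootsOfUnityHull (n : ℕ) : Set ℂ :=
  convexHull ℝ (Set.range fun k : Fin n => primRoot n ^ (k : ℕ))

/-!
A circulant matrix is diagonalised by the characters `r ↦ ω^{mr}` of `ℤ/n`, so `C(z)` is
positive semidefinite exactly when `z = ∑ₘ tₘ ω^{m·}` with all `tₘ ≥ 0`, and the unit diagonal
says `∑ₘ tₘ = z₀ = 1`. Hence the entry `z₁ = ∑ₘ tₘ ωᵐ` ranges exactly over `𝒫_n`, while every
cyclic product `∏ₖ H_{k,k+1}` of `H = C(z)` equals `z₁ⁿ`.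
-/

theorem mem_convexHull_range_iff_exists_sum {R E ι : Type*} [Field R] [LinearOrder R]
    [IsStrictOrderedRing R] [AddCommGroup E] [Module R E] [Fintype ι] {v : ι → E} {x : E} :
    x ∈ convexHull R (Set.range v) ↔
      ∃ w : ι → R, (∀ i, 0 ≤ w i) ∧ ∑ i, w i = 1 ∧ ∑ i, w i • v i = x := by
  classical
  refine ⟨fun hx => ?_, fun ⟨w, hw₀, hw₁, hx⟩ =>
    mem_convexHull_of_exists_fintype w v hw₀ hw₁ (fun i => ⟨i, rfl⟩) hx⟩
  rw [convexHull_range_eq_exists_affineCombination] at hx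
  obtain ⟨s, w, hw₀, hw₁, rfl⟩ := hx
  have hw₁' : ∑ i, Set.indicator s w i = 1 := by
    rwa [Finset.sum_indicator_subset _ s.subset_univ]
  refine ⟨Set.indicator s w, fun i => Set.indicator_nonneg hw₀ i, hw₁', ?_⟩
  rw [Finset.affineCombination_indicator_subset w v s.subset_univ,
    Finset.affineCombination_eq_linear_combination _ _ _ hw₁']

lemma isPrimitiveRoot_primRoot (n : ℕ) [NeZero n] : IsPrimitiveRoot (primRoot n) n :=
  Complex.isPrimitiveRoot_exp n (NeZero.ne n)

noncomputable def rootChar (n : ℕ) [NeZero n] : AddChar (Fin n) ℂ where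
  toFun a := primRoot n ^ (a : ℕ)
  map_zero_eq_one' := by simp
  map_add_eq_mul' a b := by
    rw [Fin.val_add, ← pow_eq_pow_mod _ (isPrimitiveRoot_primRoot n).pow_eq_one, pow_add]

section rootChar

open Fin.CommRing

variable {n : ℕ} [NeZero n]

lemma rootChar_apply (a : Fin n) : rootChar n a = primRoot n ^ (a : ℕ) := rfl

lemma isPrimitive_rootChar : (rootChar n).IsPrimitive := by
  intro a ha h
  have h1 : rootChar n a = 1 := by simpa using DFunLike.congr_fun h 1
  rw [rootChar_apply, (isPrimitiveRoot_primRoot n).pow_eq_one_iff_dvd] at h1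
  exact ha (Fin.ext (Nat.eq_zero_of_dvd_of_lt h1 a.isLt))

lemma sum_rootChar_mul (m : Fin n) :
    ∑ j, rootChar n (j * m) = if m = 0 then (n : ℂ) else 0 := by
  simpa using AddChar.sum_mulShift m isPrimitive_rootChar

end rootChar

section Circulant

open Fin.CommRing Matrix

lemma dotProduct_circulantMatrix_mulVec {n : ℕ} (z x : Fin n → ℂ) :
    star x ⬝ᵥ (circulantMatrix z *ᵥ x) = ∑ a, ∑ b, star (x a) * z (b - a) * x b := by
  simp [dotProduct, Matrix.mulVec, circulantMatrix, Finset.mul_sum, mul_assoc]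

lemma prod_circulantMatrix_apply_add_one {n : ℕ} [NeZero n] (z : Fin n → ℂ) :
    ∏ k, circulantMatrix z k (k + 1) = z 1 ^ n := by
  simp [circulantMatrix]

variable {n : ℕ} [NeZero n]

noncomputable def invDFT (t : Fin n → ℂ) (r : Fin n) : ℂ := ∑ m, t m * rootChar n (m * r)

/-- Normalised so that `invDFT (dft z) = z`; the eigenvalues of `circulantMatrix z` are
`n * dft z m`. -/
noncomputable def dft (z : Fin n → ℂ) (m : Fin n) : ℂ :=
  (n : ℂ)⁻¹ * ∑ r, z r * rootChar n (-(m * r))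

lemma invDFT_dft (z : Fin n → ℂ) : invDFT (dft z) = z := by
  funext r
  have hchar : ∀ m s : Fin n, rootChar n (-(m * s)) * rootChar n (m * r) =
      rootChar n (m * (r - s)) := fun m s => by
    rw [← AddChar.map_add_eq_mul]; ring_nf
  calc invDFT (dft z) r = (n : ℂ)⁻¹ * ∑ s, z s * ∑ m, rootChar n (m * (r - s)) := by
        simp only [invDFT, dft, Finset.mul_sum, Finset.sum_mul, mul_assoc, hchar]
        rw [Finset.sum_comm]
    _ = z r := by
        simp [sum_rootChar_mul, sub_eq_zero, mul_comm (z r), NeZero.ne]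

lemma dotProduct_circulantMatrix_invDFT_mulVec (t x : Fin n → ℂ) :
    star x ⬝ᵥ (circulantMatrix (invDFT t) *ᵥ x) =
      ∑ m, t m * Complex.normSq (∑ k, x k * rootChar n (m * k)) := by
  have hchar : ∀ m a b : Fin n, rootChar n (m * (b - a)) =
      rootChar n (-(m * a)) * rootChar n (m * b) := fun m a b => by
    rw [← AddChar.map_add_eq_mul]; ring_nf
  simp only [Complex.normSq_eq_conj_mul_self, map_sum, map_mul, ← AddChar.map_neg_eq_conj,
    Finset.sum_mul_sum]
  simp only [dotProduct_circulantMatrix_mulVec, invDFT, Finset.mul_sum, Finset.sum_mul, hchar]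
  rw [Finset.sum_comm_cycle]
  refine Finset.sum_congr rfl fun m _ => Finset.sum_congr rfl fun a _ =>
    Finset.sum_congr rfl fun b _ => ?_
  rw [Complex.star_def]
  ring

lemma posSemidef_circulantMatrix_invDFT_iff (t : Fin n → ℂ) :
    (circulantMatrix (invDFT t)).PosSemidef ↔ ∀ m, 0 ≤ t m := by
  refine ⟨fun h m => ?_, fun ht => .of_dotProduct_mulVec_nonneg ?_ fun x => ?_⟩
  · have horth : ∀ m', ∑ k, rootChar n (-(m * k)) * rootChar n (m' * k) =
        if m' = m then (n : ℂ) else 0 := fun m' => by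
      simp_rw [← AddChar.map_add_eq_mul, ← sub_eq_zero (a := m')]
      rw [← sum_rootChar_mul]
      exact Finset.sum_congr rfl fun k _ => by ring_nf
    -- The test vector `conj ∘ rootChar (m * ·)` has transform `n • Pi.single m 1`.
    have hq := h.dotProduct_mulVec_nonneg (fun k => rootChar n (-(m * k)))
    simp only [dotProduct_circulantMatrix_invDFT_mulVec, horth, apply_ite Complex.normSq,
      Complex.normSq_natCast, map_zero, apply_ite Complex.ofReal, Complex.ofReal_zero, mul_ite,
      mul_zero, Finset.sum_ite_eq', Finset.mem_univ, if_true] at hq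
    have hn : (0 : ℝ) < n * n := by have := NeZero.pos n; positivity
    have := mul_nonneg hq (Complex.zero_le_real.mpr (inv_nonneg.mpr hn.le))
    rwa [mul_assoc, ← Complex.ofReal_mul, mul_inv_cancel₀ hn.ne', Complex.ofReal_one,
      mul_one] at this
  · refine IsHermitian.ext fun j k => ?_
    simp only [circulantMatrix, invDFT, star_sum, star_mul',
      (IsSelfAdjoint.of_nonneg (ht _)).star_eq, Complex.star_def, ← AddChar.map_neg_eq_conj]
    exact Finset.sum_congr rfl fun m _ => by ring_nf
  · rw [dotProduct_circulantMatrix_invDFT_mulVec]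
    exact Finset.sum_nonneg fun m _ =>
      mul_nonneg (ht m) (Complex.zero_le_real.mpr (Complex.normSq_nonneg _))

lemma exists_posSemidef_circulantMatrix_iff_mem_rootsOfUnityHull (w : ℂ) :
    (∃ z : Fin n → ℂ, (circulantMatrix z).PosSemidef ∧ z 0 = 1 ∧ z 1 = w) ↔
      w ∈ rootsOfUnityHull n := by
  have hinv0 : ∀ t : Fin n → ℂ, invDFT t 0 = ∑ m, t m := by simp [invDFT]
  have hinv1 : ∀ t : Fin n → ℂ, invDFT t 1 = ∑ m, t m * primRoot n ^ (m : ℕ) := by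
    simp [invDFT, rootChar_apply]
  rw [rootsOfUnityHull, mem_convexHull_range_iff_exists_sum]
  constructor
  · rintro ⟨z, hpsd, hz0, rfl⟩
    rw [← invDFT_dft z] at hpsd hz0 ⊢
    have ht := (posSemidef_circulantMatrix_invDFT_iff _).mp hpsd
    have hre : ∀ m, ((dft z m).re : ℂ) = dft z m := fun m =>
      (Complex.eq_re_of_ofReal_le (ht m)).symm
    refine ⟨fun m => (dft z m).re, fun m => Complex.zero_le_real.mp ((hre m).symm ▸ ht m),
      ?_, ?_⟩
    · exact_mod_cast (by simpa [hre, hinv0] using hz0 : ∑ m, ((dft z m).re : ℂ) = 1)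
    · simp [Complex.real_smul, hre, hinv1]
  · rintro ⟨t, ht0, ht1, rfl⟩
    refine ⟨invDFT (fun m => t m), (posSemidef_circulantMatrix_invDFT_iff _).mpr fun m =>
      Complex.zero_le_real.mpr (ht0 m), ?_, ?_⟩
    · simp [hinv0, ← Complex.ofReal_sum, ht1]
    · simp [hinv1, Complex.real_smul]

end Circulant

/-- For `n ≥ 3`, the set `ℬ_n|circ` of cyclic products `∏_k H_{k,k+1}` of positive
semidefinite circulant matrices with unit diagonal is the image of `𝒫_n` under the
`n`th power map. -/
theorem Bn_circ_eq_power_image_of_polygon {n : ℕ} (hn : 3 ≤ n) :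
    {p : ℂ | ∃ H : Matrix (Fin n) (Fin n) ℂ, IsCirculant H ∧ H.PosSemidef ∧
        (∀ i, H i i = 1) ∧ p = ∏ k : Fin n, H k (k + ⟨1, by omega⟩)} =
      (fun w : ℂ => w ^ n) '' rootsOfUnityHull n := by
  have : NeZero n := ⟨by omega⟩
  have hone : (⟨1, by omega⟩ : Fin n) = 1 :=
    Fin.ext (by rw [Fin.val_one', Nat.mod_eq_of_lt (by omega)])
  ext p
  simp only [hone, Set.mem_ofPred_eq, Set.mem_image]
  constructor
  · rintro ⟨H, ⟨z, rfl⟩, hpsd, hdiag, rfl⟩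
    have hz0 : z 0 = 1 := by simpa [circulantMatrix] using hdiag 0
    refine ⟨z 1, ?_, (prod_circulantMatrix_apply_add_one z).symm⟩
    exact (exists_posSemidef_circulantMatrix_iff_mem_rootsOfUnityHull _).mp ⟨z, hpsd, hz0, rfl⟩
  · rintro ⟨w, hw, rfl⟩
    obtain ⟨z, hpsd, hz0, rfl⟩ :=
      (exists_posSemidef_circulantMatrix_iff_mem_rootsOfUnityHull w).mpr hw
    exact ⟨circulantMatrix z, ⟨z, rfl⟩, hpsd, fun i => by simp [circulantMatrix, hz0],
      (prod_circulantMatrix_apply_add_one z).symm⟩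
end

section
/- For every integer n ≥ 3, the set {wⁿ : w ∈ 𝒫_n} (the image of the convex hull of the nth roots of unity under the nth power map) is a convex subset of ℂ. -/
/-!
Write `η = π / n`. A point of `𝒫_n` is `s e^{iθ}` with `θ = ψ + (2j + 1) η` and `|ψ| ≤ η`; the
edge `[ω_n^j, ω_n^{j+1}]` gives `s cos ψ ≤ cos η`, and `w ^ n` only depends on `s` and `ψ`
since `e^{i n (2j + 1) η} = -1`. So the image is the region cut out by the `n`th power of the
single edge `[1, ω_n]`, and it is the intersection of the tangent half-planes of that curve. The
curve lies on one side of each of its tangent lines because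
`cos (n ψ - (n - 1) φ) cos^(n-1) φ ≤ cos^n ψ` for `|φ|, |ψ| ≤ η`, which follows from the
monotonicity of `y ↦ cos (n y - (n - 1) φ) / cos^n y` on both sides of its minimum. Conversely, a
point `z` in every half-plane is bounded in modulus by the half-plane at the `φ` with
`n φ ≡ arg z + π`, and its `n`th root on the ray of angle `φ + η` lies in the triangle
`conv {0, 1, ω_n}`.
-/

open Real Set
open Complex (I)

lemma Complex.re_exp_mul_I_mul_exp_neg (θ t : ℝ) :
    (exp (θ * I) * exp (-(t * I))).re = Real.cos (θ - t) := by
  rw [← Complex.exp_add, ← sub_eq_add_neg, ← sub_mul, ← Complex.ofReal_sub,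
    Complex.exp_ofReal_mul_I_re]

lemma Complex.isLinearMap_re_mul (c : ℂ) : IsLinearMap ℝ fun z : ℂ ↦ (z * c).re where
  map_add x y := by simp [add_mul]
  map_smul a x := by simp [Complex.real_smul, mul_assoc]

lemma exists_mem_Icc_eq_add_int_mul {a : ℝ} (ha : 0 < a) (x : ℝ) :
    ∃ y ∈ Icc (-a) a, ∃ m : ℤ, x = y + m * (2 * a) := by
  have hp : 0 < 2 * a := by positivity
  have hmem := toIcoMod_mem_Ico hp (-a) x
  have hsub := self_sub_toIcoMod hp (-a) x
  rw [zsmul_eq_mul] at hsub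
  exact ⟨toIcoMod hp (-a) x, ⟨hmem.1, by linarith [hmem.2]⟩, toIcoDiv hp (-a) x, by linarith⟩

section Trigonometry

variable {n : ℕ}

lemma pi_div_natCast_pos (hn : 0 < n) : 0 < π / n :=
  div_pos pi_pos (Nat.cast_pos.2 hn)

lemma cos_pos_of_mem_Icc_pi_div (hn : 3 ≤ n) {x : ℝ} (hx : x ∈ Icc (-(π / n)) (π / n)) :
    0 < cos x := by
  have : π / n < π / 2 := div_lt_div_of_pos_left pi_pos two_pos (by exact_mod_cast hn)
  exact cos_pos_of_mem_Ioo ⟨by linarith [hx.1], by linarith [hx.2]⟩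

lemma cos_pi_div_pos (hn : 3 ≤ n) : 0 < cos (π / n) :=
  cos_pos_of_mem_Icc_pi_div hn ⟨by linarith [pi_div_natCast_pos (n := n) (by omega)], le_rfl⟩

lemma neg_cos_mul_cos_pow_le (hn : 2 ≤ n) {φ : ℝ} (hφ : |φ| ≤ π / n) :
    -(cos ((n - 1) * φ) * cos φ ^ (n - 1)) ≤ cos (π / n) ^ n := by
  set g : ℝ → ℝ := fun y ↦ -(cos ((n - 1) * y) * cos y ^ (n - 1))
  have hn0 : (0 : ℝ) < n := by exact_mod_cast (show 0 < n by omega)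
  have hg' (x : ℝ) : HasDerivAt g ((n - 1) * cos x ^ (n - 2) * sin (n * x)) x := by
    have := ((((hasDerivAt_id x).const_mul ((n : ℝ) - 1)).cos).mul
      ((hasDerivAt_cos x).pow (n - 1))).neg
    refine this.congr_deriv ?_
    have hsin : sin (n * x) = sin ((n - 1) * x) * cos x + cos ((n - 1) * x) * sin x := by
      rw [← sin_add]; ring_nf
    simp only [id, Pi.pow_apply]
    rw [hsin, Nat.cast_pred (by omega), show n - 1 - 1 = n - 2 by omega,
      show n - 1 = n - 2 + 1 by omega, pow_succ]
    ring
  have hmono : MonotoneOn g (Icc 0 (π / n)) := by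
    refine monotoneOn_of_hasDerivWithinAt_nonneg (convex_Icc _ _) (by fun_prop)
      (fun x _ ↦ (hg' x).hasDerivWithinAt) fun x hx ↦ ?_
    rw [interior_Icc] at hx
    have hcos : 0 ≤ cos x := cos_nonneg_of_mem_Icc
      ⟨by linarith [pi_pos, hx.1], (hx.2.le.trans (div_le_div_of_nonneg_left pi_pos.le two_pos
        (by exact_mod_cast hn)))⟩
    have hsin : 0 ≤ sin (n * x) := sin_nonneg_of_nonneg_of_le_pi (by nlinarith [hx.1])
      (by rw [← le_div_iff₀' hn0]; exact hx.2.le)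
    have : (0 : ℝ) ≤ n - 1 := by linarith [(show (2 : ℝ) ≤ n by exact_mod_cast hn)]
    positivity
  have hend : g (π / n) = cos (π / n) ^ n := by
    have : ((n : ℝ) - 1) * (π / n) = π - π / n := by field_simp
    simp only [g, this, cos_pi_sub]
    rw [show n = n - 1 + 1 by omega, pow_succ']
    simp
  have habs : g |φ| = g φ := by
    rcases abs_choice φ with h | h <;> simp [g, h, mul_neg]
  show g φ ≤ _
  rw [← hend, ← habs]
  exact hmono ⟨abs_nonneg φ, hφ⟩ ⟨(pi_div_natCast_pos (n := n) (by omega)).le, le_rfl⟩ hφ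

lemma hasDerivAt_cos_sub_div_cos_pow (hn : 1 ≤ n) (c : ℝ) {x : ℝ} (hx : cos x ≠ 0) :
    HasDerivAt (fun y ↦ cos (n * y - c) / cos y ^ n)
      (-(n * sin ((n - 1) * x - c) * cos x ^ (n - 1)) / (cos x ^ n) ^ 2) x := by
  have := ((((hasDerivAt_id x).const_mul (n : ℝ)).sub_const c).cos).div
    ((hasDerivAt_cos x).pow n) (pow_ne_zero n hx)
  refine this.congr_deriv ?_
  have hsin : sin ((n - 1) * x - c) = sin (n * x - c) * cos x - cos (n * x - c) * sin x := by
    rw [← sin_sub]; ring_nf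
  simp only [id, Pi.pow_apply]
  rw [hsin, ← pow_sub_one_mul (by omega : n ≠ 0) (cos x)]
  ring

section Monotonicity

variable {a b c : ℝ} (hn : 1 ≤ n) (hcos : ∀ x ∈ Icc a b, 0 < cos x)
include hn hcos

lemma antitoneOn_cos_sub_div_cos_pow (hsin : ∀ x ∈ Ioo a b, 0 ≤ sin ((n - 1) * x - c)) :
    AntitoneOn (fun y ↦ cos (n * y - c) / cos y ^ n) (Icc a b) := by
  refine antitoneOn_of_hasDerivWithinAt_nonpos (convex_Icc a b)
    (ContinuousOn.div (by fun_prop) (by fun_prop) fun x hx ↦ pow_ne_zero n (hcos x hx).ne')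
    (fun x hx ↦ (hasDerivAt_cos_sub_div_cos_pow hn c
      (hcos x (interior_subset hx)).ne').hasDerivWithinAt) fun x hx ↦ ?_
  rw [interior_Icc] at hx
  have := hcos x (Ioo_subset_Icc_self hx)
  have := hsin x hx
  rw [neg_div, neg_nonpos]
  positivity

lemma monotoneOn_cos_sub_div_cos_pow (hsin : ∀ x ∈ Ioo a b, sin ((n - 1) * x - c) ≤ 0) :
    MonotoneOn (fun y ↦ cos (n * y - c) / cos y ^ n) (Icc a b) := by
  refine monotoneOn_of_hasDerivWithinAt_nonneg (convex_Icc a b)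
    (ContinuousOn.div (by fun_prop) (by fun_prop) fun x hx ↦ pow_ne_zero n (hcos x hx).ne')
    (fun x hx ↦ (hasDerivAt_cos_sub_div_cos_pow hn c
      (hcos x (interior_subset hx)).ne').hasDerivWithinAt) fun x hx ↦ ?_
  rw [interior_Icc] at hx
  have := hcos x (Ioo_subset_Icc_self hx)
  rw [neg_div, neg_nonneg]
  exact div_nonpos_of_nonpos_of_nonneg (mul_nonpos_of_nonpos_of_nonneg
    (mul_nonpos_of_nonneg_of_nonpos n.cast_nonneg (hsin x hx)) (by positivity)) (by positivity)

end Monotonicity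

lemma cos_mul_sub_mul_cos_pow_le_of_le (hn : 3 ≤ n) {φ ψ : ℝ}
    (hφ : φ ∈ Icc (-(π / n)) (π / n)) (hψ : ψ ∈ Icc (-(π / n)) (π / n)) (hφψ : φ ≤ ψ) :
    cos (n * ψ - (n - 1) * φ) * cos φ ^ (n - 1) ≤ cos ψ ^ n := by
  set f : ℝ → ℝ := fun y ↦ cos (n * y - (n - 1) * φ) / cos y ^ n
  have hn' : (3 : ℝ) ≤ n := by exact_mod_cast hn
  have hcos : ∀ x ∈ Icc φ (π / n), 0 < cos x :=
    fun x hx ↦ cos_pos_of_mem_Icc_pi_div hn ⟨hφ.1.trans hx.1, hx.2⟩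
  have hcφ := hcos φ ⟨le_rfl, hφ.2⟩
  have hcψ := hcos ψ ⟨hφψ, hψ.2⟩
  have hcη := cos_pi_div_pos hn
  suffices f ψ * cos φ ^ (n - 1) ≤ 1 by
    rwa [div_mul_eq_mul_div, div_le_one (by positivity)] at this
  have hsub (x : ℝ) : (n - 1) * x - (n - 1) * φ = (n - 1) * (x - φ) := by ring
  rcases le_or_gt ψ (φ + π / (n - 1)) with hnear | hfar
  · have hanti : AntitoneOn f (Icc φ ψ) := by
      refine antitoneOn_cos_sub_div_cos_pow (by omega) (fun x hx ↦ hcos x ⟨hx.1, hx.2.trans hψ.2⟩)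
        fun x hx ↦ ?_
      rw [hsub]
      refine sin_nonneg_of_nonneg_of_le_pi (by nlinarith [hx.1]) ?_
      rw [← le_div_iff₀' (by linarith)]
      linarith [hx.2]
    calc f ψ * cos φ ^ (n - 1) ≤ f φ * cos φ ^ (n - 1) :=
          mul_le_mul_of_nonneg_right (hanti ⟨le_rfl, hφψ⟩ ⟨hφψ, le_rfl⟩ hφψ) (by positivity)
      _ = 1 := by
          simp only [f, show (n : ℝ) * φ - (n - 1) * φ = φ by ring]
          rw [← pow_sub_one_mul (by omega : n ≠ 0) (cos φ)]
          field_simp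
  · have hπ : 0 < π / (n - 1) := div_pos pi_pos (by linarith)
    have hmono : MonotoneOn f (Icc (φ + π / (n - 1)) (π / n)) := by
      refine monotoneOn_cos_sub_div_cos_pow (by omega)
        (fun x hx ↦ hcos x ⟨by linarith [hx.1], hx.2⟩) fun x hx ↦ ?_
      have hlow : π ≤ (n - 1) * (x - φ) := by
        rw [← div_le_iff₀' (by linarith)]
        linarith [hx.1]
      have hup : (n - 1) * (x - φ) ≤ 2 * π := by
        have : x - φ ≤ 2 * (π / n) := by linarith [hx.2, hφ.1]
        calc (n - 1) * (x - φ) ≤ n * (2 * (π / n)) := by gcongr <;> linarith [hx.1]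
          _ = 2 * π := by field_simp
      rw [hsub, ← neg_nonneg, ← sin_sub_pi]
      exact sin_nonneg_of_nonneg_of_le_pi (by linarith) (by linarith)
    -- Past the minimum of `f`, compare with the endpoint `π / n`.
    have hψ' : ψ ∈ Icc (φ + π / (n - 1)) (π / n) := ⟨hfar.le, hψ.2⟩
    calc f ψ * cos φ ^ (n - 1) ≤ f (π / n) * cos φ ^ (n - 1) :=
          mul_le_mul_of_nonneg_right (hmono hψ' ⟨hψ'.1.trans hψ'.2, le_rfl⟩ hψ.2) (by positivity)
      _ = -(cos ((n - 1) * φ) * cos φ ^ (n - 1)) / cos (π / n) ^ n := by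
          simp only [f, mul_div_cancel₀ π (by positivity : (n : ℝ) ≠ 0), cos_pi_sub]
          ring
      _ ≤ 1 := by
          rw [div_le_one (by positivity)]
          exact neg_cos_mul_cos_pow_le (by omega) (abs_le.2 hφ)

lemma cos_mul_sub_mul_cos_pow_le (hn : 3 ≤ n) {φ ψ : ℝ}
    (hφ : φ ∈ Icc (-(π / n)) (π / n)) (hψ : ψ ∈ Icc (-(π / n)) (π / n)) :
    cos (n * ψ - (n - 1) * φ) * cos φ ^ (n - 1) ≤ cos ψ ^ n := by
  rcases le_total φ ψ with hφψ | hψφ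
  · exact cos_mul_sub_mul_cos_pow_le_of_le hn hφ hψ hφψ
  · have hneg {x : ℝ} (hx : x ∈ Icc (-(π / n)) (π / n)) : -x ∈ Icc (-(π / n)) (π / n) :=
      ⟨neg_le_neg hx.2, by linarith [hx.1]⟩
    have h := cos_mul_sub_mul_cos_pow_le_of_le hn (hneg hφ) (hneg hψ) (neg_le_neg hψφ)
    rwa [show (n : ℝ) * -ψ - (n - 1) * -φ = -(n * ψ - (n - 1) * φ) by ring, cos_neg, cos_neg,
      cos_neg] at h

lemma cos_mul_pi_div_le_of_odd (hn : 0 < n) {d : ℤ} (hd : Odd d) :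
    cos (d * π / n) ≤ cos (π / n) := by
  set m := d.bmod (2 * n)
  obtain ⟨k, hk⟩ : ((2 * n : ℕ) : ℤ) ∣ d - m := Int.ModEq.dvd Int.bmod_emod
  have hm_odd : Odd m := by
    simpa using hd.sub_even (⟨n * k, by rw [hk]; push_cast; ring⟩ : Even (d - m))
  have hm_pos : 1 ≤ |m| := Int.one_le_abs fun h ↦ by simp [h] at hm_odd
  have hm_le : |m| ≤ n := by
    have h1 := Int.le_bmod (x := d) (m := 2 * n) (by omega)
    have h2 := Int.bmod_lt (x := d) (m := 2 * n) (by omega)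
    push_cast at h1 h2
    rw [abs_le]; constructor <;> omega
  have hn0 : (0 : ℝ) < n := by exact_mod_cast hn
  have hperiod : d * π / n = m * π / n + k * (2 * π) := by
    have hdk : d = m + 2 * n * k := by push_cast at hk; linarith
    rw [show (d : ℝ) = m + 2 * n * k by exact_mod_cast hdk]
    field_simp
  rw [hperiod, cos_add_int_mul_two_pi, ← cos_abs, abs_div, abs_mul, abs_of_pos pi_pos,
    abs_of_pos hn0, ← Int.cast_abs]
  have hm_pos' : (1 : ℝ) ≤ (|m| : ℤ) := by exact_mod_cast hm_pos
  have hm_le' : ((|m| : ℤ) : ℝ) ≤ n := by exact_mod_cast hm_le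
  refine cos_le_cos_of_nonneg_of_le_pi (by positivity) ?_ ?_
  · rw [div_le_iff₀ hn0]; nlinarith [pi_pos]
  · gcongr; nlinarith [pi_pos]

end Trigonometry

section RootsOfUnityHull

variable {n : ℕ}

lemma primRoot_pow (n k : ℕ) : primRoot n ^ k = Complex.exp ((2 * k * π / n : ℝ) * I) := by
  rw [primRoot, ← Complex.exp_nat_mul]
  push_cast
  ring_nf

lemma re_mul_exp_le_of_mem_rootsOfUnityHull (hn : 0 < n) {w : ℂ} (hw : w ∈ rootsOfUnityHull n)
    (j : ℤ) : (w * Complex.exp (-(((2 * j + 1) * π / n : ℝ) * I))).re ≤ cos (π / n) := by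
  refine convexHull_min ?_ (convex_halfSpace_le (Complex.isLinearMap_re_mul _) _) hw
  rintro _ ⟨k, rfl⟩
  have hk := cos_mul_pi_div_le_of_odd hn (d := 2 * (k - j) - 1) ⟨k - j - 1, by ring⟩
  change Complex.re (primRoot n ^ (k : ℕ) * _) ≤ _
  rw [primRoot_pow, Complex.re_exp_mul_I_mul_exp_neg]
  convert hk using 2
  push_cast
  ring

lemma zero_mem_rootsOfUnityHull (hn : 2 ≤ n) : 0 ∈ rootsOfUnityHull n := by
  have hsum : ∑ k : Fin n, primRoot n ^ (k : ℕ) = 0 := by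
    rw [Fin.sum_univ_eq_sum_range (primRoot n ^ ·)]
    exact (Complex.isPrimitiveRoot_exp n (by omega)).geom_sum_eq_zero (by omega)
  have := (convex_convexHull ℝ _).sum_mem (t := Finset.univ) (w := fun _ ↦ (n : ℝ)⁻¹)
    (z := fun k : Fin n ↦ primRoot n ^ (k : ℕ)) (fun _ _ ↦ by positivity)
    (by simp [Nat.cast_ne_zero.2 (by omega : n ≠ 0)])
    fun k _ ↦ subset_convexHull ℝ _ (mem_range_self k)
  rwa [← Finset.smul_sum, hsum, smul_zero] at this

lemma smul_one_add_smul_primRoot_mem_rootsOfUnityHull (hn : 2 ≤ n) {a b : ℝ} (ha : 0 ≤ a)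
    (hb : 0 ≤ b) (hab : a + b ≤ 1) : a • (1 : ℂ) + b • primRoot n ∈ rootsOfUnityHull n := by
  have hvert : ∀ i, ![0, 1, primRoot n] i ∈ rootsOfUnityHull n := by
    intro i
    fin_cases i
    · exact zero_mem_rootsOfUnityHull hn
    · exact subset_convexHull ℝ _ ⟨⟨0, by omega⟩, pow_zero _⟩
    · exact subset_convexHull ℝ _ ⟨⟨1, by omega⟩, pow_one _⟩
  have hconv : Convex ℝ (rootsOfUnityHull n) := convex_convexHull ℝ _
  convert hconv.sum_mem (t := Finset.univ) (w := ![1 - a - b, a, b])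
    (fun i _ ↦ by fin_cases i <;> simp <;> linarith) (by simp [Fin.sum_univ_three]; ring)
    fun i _ ↦ hvert i using 1
  simp [Fin.sum_univ_three]

lemma ofReal_mul_exp_mem_rootsOfUnityHull (hn : 3 ≤ n) {s θ : ℝ} (hs : 0 ≤ s)
    (hθ : θ ∈ Icc 0 (2 * (π / n))) (h : s * cos (θ - π / n) ≤ cos (π / n)) :
    (s : ℂ) * Complex.exp (θ * I) ∈ rootsOfUnityHull n := by
  have hn0 : (0 : ℝ) < n := by exact_mod_cast (show 0 < n by omega)
  have hη : 0 < π / n := div_pos pi_pos hn0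
  have h2η : 2 * (π / n) < π := by
    rw [← lt_div_iff₀' two_pos, div_lt_div_iff_of_pos_left pi_pos hn0 two_pos]
    exact_mod_cast (show 2 < n by omega)
  have hS : 0 < sin (2 * (π / n)) := sin_pos_of_pos_of_lt_pi (by positivity) h2η
  have hcη := cos_pi_div_pos hn
  set a := s * sin (2 * (π / n) - θ) / sin (2 * (π / n))
  set b := s * sin θ / sin (2 * (π / n))
  have ha : 0 ≤ a := div_nonneg (mul_nonneg hs
    (sin_nonneg_of_nonneg_of_le_pi (by linarith [hθ.2]) (by linarith [hθ.1]))) hS.le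
  have hb : 0 ≤ b := div_nonneg (mul_nonneg hs
    (sin_nonneg_of_nonneg_of_le_pi hθ.1 (by linarith [hθ.2]))) hS.le
  have hab : a + b ≤ 1 := by
    have hsum (x : ℝ) : sin (π / n - x) + sin (π / n + x) = 2 * sin (π / n) * cos x := by
      rw [sin_sub, sin_add]; ring
    have : a + b = s * cos (θ - π / n) / cos (π / n) := by
      have := hsum (θ - π / n)
      rw [show π / n - (θ - π / n) = 2 * (π / n) - θ by ring, add_sub_cancel] at this
      have hsη : 0 < sin (π / n) := sin_pos_of_pos_of_lt_pi hη (by linarith)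
      rw [← add_div, ← mul_add, this, sin_two_mul]
      field_simp
    rw [this, div_le_one hcη]
    exact h
  convert smul_one_add_smul_primRoot_mem_rootsOfUnityHull (n := n) (by omega) ha hb hab using 1
  rw [← pow_one (primRoot n), primRoot_pow n 1]
  apply Complex.ext <;>
    simp only [Complex.add_re, Complex.add_im, Complex.smul_re, Complex.smul_im, Complex.one_re,
      Complex.one_im, Complex.re_ofReal_mul, Complex.im_ofReal_mul, Complex.exp_ofReal_mul_I_re,
      Complex.exp_ofReal_mul_I_im, smul_eq_mul, a, b]
  all_goals
    rw [show 2 * ((1 : ℕ) : ℝ) * π / n = 2 * (π / n) by push_cast; ring]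
    generalize 2 * (π / n) = x at hS ⊢
    rw [sin_sub]
    field_simp
    ring

end RootsOfUnityHull

section PowerImage

variable {n : ℕ}

/-- The half-plane with parameter `φ` is bounded by the tangent line, at `ψ = φ`, of the curve
`ψ ↦ (cos (π / n) / cos ψ * exp ((ψ + π / n) * I)) ^ n`: the image of the edge `[1, ω_n]`
of `𝒫_n` under `w ↦ w ^ n`. -/
noncomputable def tangentHalfPlanes (n : ℕ) : Set ℂ :=
  ⋂ φ ∈ Icc (-(π / n)) (π / n),
    {z : ℂ | -cos (π / n) ^ n ≤
      (z * Complex.exp (-(((n - 1) * φ : ℝ) * I))).re * cos φ ^ (n - 1)}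

lemma convex_tangentHalfPlanes (n : ℕ) : Convex ℝ (tangentHalfPlanes n) :=
  convex_iInter₂ fun φ _ ↦ convex_halfSpace_ge
    ⟨fun x y ↦ by simp [add_mul], fun a x ↦ by simp [Complex.real_smul, mul_assoc]⟩ _

lemma pow_mem_tangentHalfPlanes (hn : 3 ≤ n) {w : ℂ} (hw : w ∈ rootsOfUnityHull n) :
    w ^ n ∈ tangentHalfPlanes n := by
  have hn0 : (n : ℝ) ≠ 0 := Nat.cast_ne_zero.2 (by omega)
  obtain ⟨ψ, hψ, j, hj⟩ :=
    exists_mem_Icc_eq_add_int_mul (pi_div_natCast_pos (n := n) (by omega)) (w.arg - π / n)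
  have harg : w.arg = ψ + (2 * j + 1) * π / n := by
    rw [sub_eq_iff_eq_add.1 hj]
    field_simp
    ring
  have hpolar := Complex.norm_mul_exp_arg_mul_I w
  have hs : ‖w‖ * cos ψ ≤ cos (π / n) := by
    have := re_mul_exp_le_of_mem_rootsOfUnityHull (by omega) hw j
    rwa [← hpolar, mul_assoc, Complex.re_ofReal_mul, Complex.re_exp_mul_I_mul_exp_neg, harg,
      add_sub_cancel_right] at this
  have hpow : w ^ n = ((‖w‖ ^ n : ℝ) : ℂ) * Complex.exp ((n * w.arg : ℝ) * I) := by
    conv_lhs => rw [← hpolar]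
    rw [mul_pow, ← Complex.exp_nat_mul]
    push_cast
    ring_nf
  refine mem_iInter₂.2 fun φ hφ ↦ ?_
  have hre : (w ^ n * Complex.exp (-(((n - 1) * φ : ℝ) * I))).re =
      -(‖w‖ ^ n * cos (n * ψ - (n - 1) * φ)) := by
    rw [hpow, mul_assoc, Complex.re_ofReal_mul, Complex.re_exp_mul_I_mul_exp_neg, harg,
      show n * (ψ + (2 * j + 1) * π / n) - (n - 1) * φ = n * ψ - (n - 1) * φ + π + j * (2 * π) by
        field_simp; ring,
      cos_add_int_mul_two_pi, cos_add_pi, mul_neg]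
  change -cos (π / n) ^ n ≤ _
  rw [hre, neg_mul, neg_le_neg_iff]
  have hcψ := cos_pos_of_mem_Icc_pi_div hn hψ
  calc ‖w‖ ^ n * cos (n * ψ - (n - 1) * φ) * cos φ ^ (n - 1)
      = ‖w‖ ^ n * (cos (n * ψ - (n - 1) * φ) * cos φ ^ (n - 1)) := mul_assoc _ _ _
    _ ≤ ‖w‖ ^ n * cos ψ ^ n := by gcongr; exact cos_mul_sub_mul_cos_pow_le hn hφ hψ
    _ = (‖w‖ * cos ψ) ^ n := (mul_pow _ _ _).symm
    _ ≤ cos (π / n) ^ n := by gcongr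

lemma exists_pow_eq_of_mem_tangentHalfPlanes (hn : 3 ≤ n) {z : ℂ}
    (hz : z ∈ tangentHalfPlanes n) : ∃ w ∈ rootsOfUnityHull n, w ^ n = z := by
  have hn0 : (n : ℝ) ≠ 0 := Nat.cast_ne_zero.2 (by omega)
  obtain ⟨φ, hφ, m, hm⟩ :=
    exists_mem_Icc_eq_add_int_mul (pi_div_natCast_pos (n := n) (by omega)) ((z.arg + π) / n)
  have harg : z.arg = n * φ - π + m * (2 * π) := by
    rw [div_eq_iff hn0] at hm
    field_simp at hm
    linarith
  have hpolar := Complex.norm_mul_exp_arg_mul_I z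
  have hcφ := cos_pos_of_mem_Icc_pi_div hn hφ
  have hbound : ‖z‖ * cos φ ^ n ≤ cos (π / n) ^ n := by
    have := mem_iInter₂.1 hz φ hφ
    change -cos (π / n) ^ n ≤ _ at this
    rw [← hpolar, mul_assoc, Complex.re_ofReal_mul, Complex.re_exp_mul_I_mul_exp_neg, harg,
      show n * φ - π + m * (2 * π) - (n - 1) * φ = φ - π + m * (2 * π) by ring,
      cos_add_int_mul_two_pi, cos_sub_pi] at this
    rw [← pow_sub_one_mul (by omega : n ≠ 0)]
    linarith
  set s := ‖z‖ ^ (n : ℝ)⁻¹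
  have hs_pow : s ^ n = ‖z‖ := rpow_inv_natCast_pow (norm_nonneg z) (by omega)
  have hs : s * cos φ ≤ cos (π / n) := by
    rwa [← pow_le_pow_iff_left₀ (by positivity) (cos_pi_div_pos hn).le (by omega : n ≠ 0),
      mul_pow, hs_pow]
  refine ⟨s * Complex.exp ((φ + π / n : ℝ) * I), ofReal_mul_exp_mem_rootsOfUnityHull hn
    (by positivity) ⟨by linarith [hφ.1], by linarith [hφ.2]⟩ (by rwa [add_sub_cancel_right]), ?_⟩
  rw [mul_pow, ← Complex.exp_nat_mul, ← Complex.ofReal_pow, hs_pow]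
  conv_rhs => rw [← hpolar, harg]
  congr 1
  have hn0' : (n : ℂ) ≠ 0 := by exact_mod_cast hn0
  rw [show (n : ℂ) * ((φ + π / n : ℝ) * I) =
      ((n * φ - π + m * (2 * π) : ℝ) : ℂ) * I + (1 - m : ℤ) * (2 * π * I) by
    push_cast; field_simp; ring, Complex.exp_add, Complex.exp_int_mul_two_pi_mul_I, mul_one]

lemma image_pow_rootsOfUnityHull (hn : 3 ≤ n) :
    (fun w : ℂ ↦ w ^ n) '' rootsOfUnityHull n = tangentHalfPlanes n :=
  Subset.antisymm (image_subset_iff.2 fun _ ↦ pow_mem_tangentHalfPlanes hn)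
    fun _ hz ↦ exists_pow_eq_of_mem_tangentHalfPlanes hn hz

end PowerImage

/-- For `n ≥ 3`, the image of the convex hull of the `n`th roots of unity under the
`n`th power map is a convex subset of `ℂ`. -/
theorem convex_power_image_of_polygon {n : ℕ} (hn : 3 ≤ n) :
    Convex ℝ ((fun w : ℂ => w ^ n) '' rootsOfUnityHull n) := by
  rw [image_pow_rootsOfUnityHull hn]
  exact convex_tangentHalfPlanes n
end

section
/- For all integers n ≥ 3 and d ≥ 2, ℬ_n(d) = ℬ_n(2): every complex number of the form ∏_{k=1}^{n} ⟪ψ_k, ψ_{k⊕1}⟫ for unit vectors ψ₁,…,ψₙ in ℂ^d is also of this form for some unit vectors in ℂ², and conversely. -/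
/-!
An `n`-cycle is an open chain `x₀, …, xₙ` of unit vectors with `⟪x₀, xₙ⟫ = 1`, so it suffices to
compare, for `m ≥ 2` and every `s`, the sets of products `∏ ⟪x_k, x_{k+1}⟫` along chains of length
`m` with `⟪x₀, x_m⟫ = s`: the set for any space is contained in the set for any space of dimension
at least two. For `m = 2` both are the ellipse `‖z‖ + ‖s - z‖ ≤ 1`. In the induction step the
first vertex is prepended to a chain realised in the small space. The Gram matrix of `x₀, x₁, x_m`
is positive semidefinite, but the new vertex fits into the plane of `x₁, x_m` only if it is
singular; by the intermediate value theorem it becomes singular after raising `|⟪x₀, x₁⟫|` to some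
`l ≤ 1`, and the tail product is scaled down by `|⟪x₀, x₁⟫| / l` to compensate, which the
induction allows because it proves the sets star-shaped about `0` along the way.
-/

open Finset Module Complex
open scoped InnerProductSpace ComplexConjugate

namespace Bargmann

variable {E F : Type*} [NormedAddCommGroup E] [InnerProductSpace ℂ E]
  [NormedAddCommGroup F] [InnerProductSpace ℂ F]

lemma exists_norm_eq_one_eq_norm_mul (z : ℂ) : ∃ ω : ℂ, ‖ω‖ = 1 ∧ z = ‖z‖ * ω :=
  ⟨_, norm_exp_ofReal_mul_I _, (norm_mul_exp_arg_mul_I z).symm⟩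

lemma mul_add_le_one_of_sq_le {a b x : ℝ} (ha₁ : a ≤ 1) (hb₀ : 0 ≤ b) (hb₁ : b ≤ 1)
    (hx : x ^ 2 ≤ (1 - a ^ 2) * (1 - b ^ 2)) : a * b + x ≤ 1 := by
  nlinarith [sq_nonneg (a - b), mul_le_one₀ ha₁ hb₀ hb₁]

lemma norm_inner_le_one {x y : E} (hx : ‖x‖ = 1) (hy : ‖y‖ = 1) : ‖⟪x, y⟫_ℂ‖ ≤ 1 := by
  simpa [hx, hy] using norm_inner_le_norm (𝕜 := ℂ) x y

lemma inner_sub_inner_smul_self {y : E} (hy : ‖y‖ = 1) (u : E) :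
    ⟪y, u - ⟪y, u⟫_ℂ • y⟫_ℂ = 0 := by
  rw [inner_sub_right, inner_smul_right, inner_self_eq_one_of_norm_eq_one hy, mul_one, sub_self]

lemma norm_sub_inner_smul_sq {y : E} (hy : ‖y‖ = 1) (u : E) :
    ‖u - ⟪y, u⟫_ℂ • y‖ ^ 2 = ‖u‖ ^ 2 - ‖⟪y, u⟫_ℂ‖ ^ 2 := by
  have h := norm_add_sq_eq_norm_sq_add_norm_sq_of_inner_eq_zero (𝕜 := ℂ) (⟪y, u⟫_ℂ • y)
    (u - ⟪y, u⟫_ℂ • y) (by rw [inner_smul_left, inner_sub_inner_smul_self hy, mul_zero])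
  rw [add_sub_cancel, norm_smul, hy, mul_one] at h
  linarith

/-- Cauchy–Schwarz for the components of `p` and `r` orthogonal to `q`. -/
lemma norm_inner_sub_inner_mul_inner_sq_le {p q r : E} (hp : ‖p‖ = 1) (hq : ‖q‖ = 1)
    (hr : ‖r‖ = 1) :
    ‖⟪p, r⟫_ℂ - ⟪p, q⟫_ℂ * ⟪q, r⟫_ℂ‖ ^ 2 ≤ (1 - ‖⟪p, q⟫_ℂ‖ ^ 2) * (1 - ‖⟪q, r⟫_ℂ‖ ^ 2) := by
  have hinner : ⟪p - ⟪q, p⟫_ℂ • q, r - ⟪q, r⟫_ℂ • q⟫_ℂ = ⟪p, r⟫_ℂ - ⟪p, q⟫_ℂ * ⟪q, r⟫_ℂ := by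
    simp only [inner_sub_left, inner_sub_right, inner_smul_left, inner_smul_right,
      inner_conj_symm, inner_self_eq_one_of_norm_eq_one hq]
    ring
  calc ‖⟪p, r⟫_ℂ - ⟪p, q⟫_ℂ * ⟪q, r⟫_ℂ‖ ^ 2
      ≤ (‖p - ⟪q, p⟫_ℂ • q‖ * ‖r - ⟪q, r⟫_ℂ • q‖) ^ 2 := by
        rw [← hinner]
        exact pow_le_pow_left₀ (norm_nonneg _) (norm_inner_le_norm _ _) 2
    _ = (1 - ‖⟪p, q⟫_ℂ‖ ^ 2) * (1 - ‖⟪q, r⟫_ℂ‖ ^ 2) := by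
        rw [mul_pow, norm_sub_inner_smul_sq hq, norm_sub_inner_smul_sq hq, hp, hr,
          norm_inner_symm q p, one_pow]

lemma exists_norm_eq_one_inner_eq_zero (hF : 2 ≤ finrank ℂ F) (y : F) :
    ∃ f : F, ‖f‖ = 1 ∧ ⟪y, f⟫_ℂ = 0 := by
  have : FiniteDimensional ℂ F := Module.finite_of_finrank_pos (by omega)
  have : Nontrivial (ℂ ∙ y)ᗮ := by
    have h₁ := (ℂ ∙ y).finrank_add_finrank_orthogonal
    have h₂ : finrank ℂ (ℂ ∙ y) ≤ 1 := by simpa using finrank_span_le_card ({y} : Set F)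
    exact nontrivial_of_finrank_pos (R := ℂ) (by omega)
  obtain ⟨⟨f, hf⟩, hf₁⟩ := exists_norm_eq (ℂ ∙ y)ᗮ zero_le_one
  exact ⟨f, hf₁, Submodule.mem_orthogonal_singleton_iff_inner_right.mp hf⟩

lemma exists_eq_inner_smul_add_smul (hF : 2 ≤ finrank ℂ F) {y : F} (hy : ‖y‖ = 1) (u : F) :
    ∃ f : F, ‖f‖ = 1 ∧ ⟪y, f⟫_ℂ = 0 ∧ u = ⟪y, u⟫_ℂ • y + (‖u - ⟪y, u⟫_ℂ • y‖ : ℂ) • f := by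
  set r := u - ⟪y, u⟫_ℂ • y with hr_def
  by_cases hr : r = 0
  · obtain ⟨f, hf, hyf⟩ := exists_norm_eq_one_inner_eq_zero hF y
    exact ⟨f, hf, hyf, by rw [hr, norm_zero, ofReal_zero, zero_smul, add_zero, ← sub_eq_zero, ← hr]⟩
  · have hr' : (‖r‖ : ℂ) ≠ 0 := ofReal_ne_zero.mpr (norm_ne_zero_iff.mpr hr)
    refine ⟨(‖r‖⁻¹ : ℂ) • r, norm_smul_inv_norm hr, ?_, ?_⟩
    · rw [inner_smul_right, inner_sub_inner_smul_self hy, mul_zero]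
    · rw [smul_smul, mul_inv_cancel₀ hr', one_smul, hr_def, add_sub_cancel]

def chainInvariants (E : Type*) [NormedAddCommGroup E] [InnerProductSpace ℂ E] (m : ℕ) (s : ℂ) :
    Set ℂ :=
  {z | ∃ x : ℕ → E, (∀ k, ‖x k‖ = 1) ∧ ⟪x 0, x m⟫_ℂ = s ∧ z = ∏ k ∈ range m, ⟪x k, x (k + 1)⟫_ℂ}

lemma norm_le_one_of_mem_chainInvariants {m : ℕ} {s z : ℂ} (hz : z ∈ chainInvariants E m s) :
    ‖s‖ ≤ 1 := by
  obtain ⟨x, hx, rfl, -⟩ := hz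
  exact norm_inner_le_one (hx 0) (hx m)

lemma eq_of_mem_chainInvariants_one {t w : ℂ} (hw : w ∈ chainInvariants E 1 t) : w = t := by
  obtain ⟨x, -, rfl, rfl⟩ := hw
  simp

lemma exists_of_mem_chainInvariants_succ {m : ℕ} {s z : ℂ}
    (hz : z ∈ chainInvariants E (m + 1) s) :
    ∃ c t w : ℂ, ‖c‖ ≤ 1 ∧ ‖s - c * t‖ ^ 2 ≤ (1 - ‖c‖ ^ 2) * (1 - ‖t‖ ^ 2) ∧
      w ∈ chainInvariants E m t ∧ z = c * w := by
  obtain ⟨x, hx, rfl, rfl⟩ := hz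
  exact ⟨_, _, _, norm_inner_le_one (hx 0) (hx 1),
    norm_inner_sub_inner_mul_inner_sq_le (hx 0) (hx 1) (hx (m + 1)),
    ⟨fun k => x (k + 1), fun k => hx _, rfl, rfl⟩, prod_range_succ' _ _ |>.trans (mul_comm _ _)⟩

lemma inner_mul_prod_mem_chainInvariants_succ {y : ℕ → E} (hy : ∀ k, ‖y k‖ = 1) {a : E}
    (ha : ‖a‖ = 1) (m : ℕ) :
    ⟪a, y 0⟫_ℂ * ∏ k ∈ range m, ⟪y k, y (k + 1)⟫_ℂ ∈ chainInvariants E (m + 1) ⟪a, y m⟫_ℂ := by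
  refine ⟨fun k => k.casesOn a y, fun k => ?_, rfl, ?_⟩
  · cases k
    exacts [ha, hy _]
  · rw [prod_range_succ', mul_comm]
    rfl

lemma one_mem_chainInvariants_zero [Nontrivial F] : 1 ∈ chainInvariants F 0 1 := by
  obtain ⟨f, hf⟩ := exists_norm_eq F zero_le_one
  exact ⟨fun _ => f, fun _ => hf, inner_self_eq_one_of_norm_eq_one hf, by simp⟩

/-- `hcts` says that the Gram matrix of the new vertex and the end points of the chain is
singular. -/
theorem mul_mem_chainInvariants_succ_of_eq (hF : 2 ≤ finrank ℂ F) {m : ℕ} {c t s w : ℂ}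
    (hc : ‖c‖ ≤ 1) (hcts : ‖s - c * t‖ ^ 2 = (1 - ‖c‖ ^ 2) * (1 - ‖t‖ ^ 2))
    (hw : w ∈ chainInvariants F m t) : c * w ∈ chainInvariants F (m + 1) s := by
  obtain ⟨y, hy, rfl, rfl⟩ := hw
  obtain ⟨f, hf, hyf, hym⟩ := exists_eq_inner_smul_add_smul hF (hy 0) (y m)
  set t := ⟪y 0, y m⟫_ℂ
  set σ := ‖y m - t • y 0‖
  have hσ : σ ^ 2 = 1 - ‖t‖ ^ 2 := by rw [norm_sub_inner_smul_sq (hy 0), hy m, one_pow]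
  have hc' : 0 ≤ 1 - ‖c‖ ^ 2 := by nlinarith [norm_nonneg c]
  have hnorm : ‖s - c * t‖ = √(1 - ‖c‖ ^ 2) * σ := by
    rw [← Real.sqrt_sq (norm_nonneg _), hcts, ← hσ, Real.sqrt_mul hc', Real.sqrt_sq (norm_nonneg _)]
  obtain ⟨ω, hω, hsct⟩ := exists_norm_eq_one_eq_norm_mul (s - c * t)
  set a := conj c • y 0 + ((√(1 - ‖c‖ ^ 2) : ℂ) * conj ω) • f
  have hfy : ⟪f, y 0⟫_ℂ = 0 := by rw [← inner_conj_symm, hyf, map_zero]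
  have ha : ‖a‖ = 1 := by
    have h := norm_add_sq_eq_norm_sq_add_norm_sq_of_inner_eq_zero (𝕜 := ℂ) (conj c • y 0)
      (((√(1 - ‖c‖ ^ 2) : ℂ) * conj ω) • f)
      (by rw [inner_smul_left, inner_smul_right, hyf, mul_zero, mul_zero])
    rw [norm_smul, norm_smul, norm_mul, RCLike.norm_conj, RCLike.norm_conj, hω, hy 0, hf,
      norm_real, Real.norm_of_nonneg (Real.sqrt_nonneg _), mul_one, mul_one, mul_one] at h
    change ‖a‖ * ‖a‖ = _ at h
    rw [Real.mul_self_sqrt hc'] at h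
    nlinarith [norm_nonneg a]
  have hay : ⟪a, y 0⟫_ℂ = c := by
    simp only [a, inner_add_left, inner_smul_left, inner_self_eq_one_of_norm_eq_one (hy 0), hfy]
    simp
  have has : ⟪a, y m⟫_ℂ = s := by
    rw [hym]
    simp only [a, inner_add_left, inner_add_right, inner_smul_left, inner_smul_right,
      inner_self_eq_one_of_norm_eq_one (hy 0), inner_self_eq_one_of_norm_eq_one hf, hfy, hyf]
    simp only [RCLike.conj_conj, map_mul, conj_ofReal, mul_one, mul_zero, add_zero, zero_add]
    have hnorm' : (‖s - c * t‖ : ℂ) = √(1 - ‖c‖ ^ 2) * σ := by exact_mod_cast hnorm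
    linear_combination -hsct - ω * hnorm'
  simpa only [hay, has] using inner_mul_prod_mem_chainInvariants_succ hy ha m

lemma mem_chainInvariants_one (hF : 2 ≤ finrank ℂ F) {t : ℂ} (ht : ‖t‖ ≤ 1) :
    t ∈ chainInvariants F 1 t := by
  have : Nontrivial F := nontrivial_of_finrank_pos (R := ℂ) (by omega)
  simpa using mul_mem_chainInvariants_succ_of_eq hF ht (by simp) one_mem_chainInvariants_zero

theorem mem_chainInvariants_two (hF : 2 ≤ finrank ℂ F) {s v : ℂ} (hv : ‖v‖ + ‖s - v‖ ≤ 1) :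
    v ∈ chainInvariants F 2 s := by
  -- `v = c * t` with `‖c‖ ^ 2 = p` and `‖t‖ ^ 2 = q` the roots of
  -- `X ^ 2 - (1 + ‖v‖ ^ 2 - ‖s - v‖ ^ 2) X + ‖v‖ ^ 2`
  obtain ⟨p, q, hp₀, hp₁, hq₀, hq₁, hsum, hpq⟩ : ∃ p q : ℝ, 0 ≤ p ∧ p ≤ 1 ∧ 0 ≤ q ∧ q ≤ 1 ∧
      p + q = 1 + ‖v‖ ^ 2 - ‖s - v‖ ^ 2 ∧ p * q = ‖v‖ ^ 2 := by
    have hsv : ‖s - v‖ ≤ 1 - ‖v‖ := by linarith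
    have hsv₀ := norm_nonneg (s - v)
    have hv₀ := norm_nonneg v
    have hB : 2 * ‖v‖ ≤ 1 + ‖v‖ ^ 2 - ‖s - v‖ ^ 2 := by
      nlinarith [mul_self_le_mul_self hsv₀ hsv]
    have hD : 0 ≤ (1 + ‖v‖ ^ 2 - ‖s - v‖ ^ 2) ^ 2 - 4 * ‖v‖ ^ 2 := by nlinarith
    set δ := √((1 + ‖v‖ ^ 2 - ‖s - v‖ ^ 2) ^ 2 - 4 * ‖v‖ ^ 2)
    have hδ : δ ^ 2 = (1 + ‖v‖ ^ 2 - ‖s - v‖ ^ 2) ^ 2 - 4 * ‖v‖ ^ 2 := Real.sq_sqrt hD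
    have hδ₀ : 0 ≤ δ := Real.sqrt_nonneg _
    have hδ₁ : δ ≤ 1 + ‖v‖ ^ 2 - ‖s - v‖ ^ 2 :=
      (Real.sqrt_le_left (by nlinarith)).mpr (by nlinarith)
    have hδ₂ : δ ≤ 1 - ‖v‖ ^ 2 + ‖s - v‖ ^ 2 :=
      (Real.sqrt_le_left (by nlinarith)).mpr (by nlinarith)
    exact ⟨(1 + ‖v‖ ^ 2 - ‖s - v‖ ^ 2 - δ) / 2, (1 + ‖v‖ ^ 2 - ‖s - v‖ ^ 2 + δ) / 2,
      by linarith, by linarith, by linarith, by linarith, by ring, by linear_combination hδ / (-4)⟩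
  obtain ⟨ω, hω, hvω⟩ := exists_norm_eq_one_eq_norm_mul v
  have hc : ‖(√p : ℂ)‖ = √p := by rw [norm_real, Real.norm_of_nonneg (Real.sqrt_nonneg _)]
  have ht : ‖(√q : ℂ) * ω‖ = √q := by
    rw [norm_mul, hω, mul_one, norm_real, Real.norm_of_nonneg (Real.sqrt_nonneg _)]
  have hct : (√p : ℂ) * ((√q : ℂ) * ω) = v := by
    rw [← mul_assoc, ← ofReal_mul, ← Real.sqrt_mul hp₀, hpq, Real.sqrt_sq (norm_nonneg v)]
    exact hvω.symm
  have key := mul_mem_chainInvariants_succ_of_eq hF (s := s)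
    (hc.trans_le (Real.sqrt_le_one.mpr hp₁))
    (by rw [hc, ht, Real.sq_sqrt hp₀, Real.sq_sqrt hq₀, hct]; linear_combination hsum - hpq)
    (mem_chainInvariants_one hF (ht.trans_le (Real.sqrt_le_one.mpr hq₁)))
  rwa [hct] at key

lemma norm_add_norm_sub_le_one {s z : ℂ} (hz : z ∈ chainInvariants E 2 s) :
    ‖z‖ + ‖s - z‖ ≤ 1 := by
  obtain ⟨c, t, w, hc, hcts, hw, rfl⟩ := exists_of_mem_chainInvariants_succ hz
  have ht := norm_le_one_of_mem_chainInvariants hw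
  obtain rfl := eq_of_mem_chainInvariants_one hw
  rw [norm_mul]
  exact mul_add_le_one_of_sq_le hc (norm_nonneg w) ht hcts

lemma norm_ofReal_mul_add_norm_sub_le_one {s z : ℂ} (hz : ‖z‖ + ‖s - z‖ ≤ 1) {ρ : ℝ}
    (hρ₀ : 0 ≤ ρ) (hρ₁ : ρ ≤ 1) : ‖(ρ : ℂ) * z‖ + ‖s - ρ * z‖ ≤ 1 := by
  have hs : ‖s‖ ≤ 1 := (norm_le_norm_add_norm_sub' s z).trans hz
  calc ‖(ρ : ℂ) * z‖ + ‖s - ρ * z‖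
      = ‖(ρ : ℂ) * z‖ + ‖(ρ : ℂ) * (s - z) + ((1 - ρ : ℝ) : ℂ) * s‖ := by
        push_cast
        ring_nf
    _ ≤ ρ * (‖z‖ + ‖s - z‖) + (1 - ρ) * ‖s‖ := by
        grw [norm_add_le]
        simp only [norm_mul, norm_real, Real.norm_of_nonneg hρ₀,
          Real.norm_of_nonneg (sub_nonneg.mpr hρ₁)]
        linarith
    _ ≤ 1 := by nlinarith

theorem mul_mem_chainInvariants_succ (hF : 2 ≤ finrank ℂ F) {m : ℕ} {c t s w : ℂ}
    (hc : ‖c‖ ≤ 1) (hcts : ‖s - c * t‖ ^ 2 ≤ (1 - ‖c‖ ^ 2) * (1 - ‖t‖ ^ 2))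
    (hw : ∀ ρ : ℝ, 0 ≤ ρ → ρ ≤ 1 → (ρ : ℂ) * w ∈ chainInvariants F m t) :
    c * w ∈ chainInvariants F (m + 1) s := by
  obtain ⟨ω, hω, hcω⟩ := exists_norm_eq_one_eq_norm_mul c
  obtain ⟨l, ⟨hcl, hl₁⟩, hl_root⟩ : ∃ l ∈ Set.Icc ‖c‖ 1,
      (1 - l ^ 2) * (1 - ‖t‖ ^ 2) - ‖s - l * ω * t‖ ^ 2 = 0 := by
    refine intermediate_value_Icc' hc (by fun_prop) ⟨?_, ?_⟩
    · simp
    · simpa [← hcω] using hcts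
  have hl₀ : 0 ≤ l := (norm_nonneg c).trans hcl
  have hlω : ‖(l : ℂ) * ω‖ = l := by rw [norm_mul, hω, mul_one, norm_real, Real.norm_of_nonneg hl₀]
  have key := mul_mem_chainInvariants_succ_of_eq hF (s := s) (hlω.trans_le hl₁)
    (by rw [hlω]; linarith [hl_root])
    (hw (‖c‖ / l) (div_nonneg (norm_nonneg c) hl₀) (div_le_one_of_le₀ hcl hl₀))
  convert key using 1
  rcases hl₀.eq_or_lt with rfl | hl
  · simp [norm_le_zero_iff.mp hcl]
  · have hl' : (l : ℂ) ≠ 0 := ofReal_ne_zero.mpr hl.ne'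
    conv_lhs => rw [hcω]
    push_cast
    field_simp

theorem ofReal_mul_mem_chainInvariants (hF : 2 ≤ finrank ℂ F) {m : ℕ} (hm : 2 ≤ m) {s z : ℂ}
    (hz : z ∈ chainInvariants E m s) {ρ : ℝ} (hρ₀ : 0 ≤ ρ) (hρ₁ : ρ ≤ 1) :
    (ρ : ℂ) * z ∈ chainInvariants F m s := by
  induction m, hm using Nat.le_induction generalizing s z ρ with
  | base =>
    exact mem_chainInvariants_two hF
      (norm_ofReal_mul_add_norm_sub_le_one (norm_add_norm_sub_le_one hz) hρ₀ hρ₁)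
  | succ m hm ih =>
    obtain ⟨c, t, w, hc, hcts, hw, rfl⟩ := exists_of_mem_chainInvariants_succ hz
    rw [mul_left_comm]
    refine mul_mem_chainInvariants_succ hF hc hcts fun ρ' hρ'₀ hρ'₁ => ?_
    simpa [mul_assoc] using ih hw (mul_nonneg hρ'₀ hρ₀) (mul_le_one₀ hρ'₁ hρ₀ hρ₁)

theorem chainInvariants_subset (hF : 2 ≤ finrank ℂ F) {m : ℕ} (hm : 2 ≤ m) (s : ℂ) :
    chainInvariants E m s ⊆ chainInvariants F m s := fun z hz => by
  simpa using ofReal_mul_mem_chainInvariants hF hm hz zero_le_one le_rfl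

lemma prod_inner_fin_eq_prod_range {n : ℕ} (hn : 1 < n) {x : ℕ → E} (hx : x n = x 0) :
    ∏ k : Fin n, ⟪x k, x ↑(k + ⟨1, hn⟩)⟫_ℂ = ∏ k ∈ range n, ⟪x k, x (k + 1)⟫_ℂ := by
  rw [← Fin.prod_univ_eq_prod_range]
  refine prod_congr rfl fun k _ => ?_
  rw [Fin.val_add, Fin.val_mk]
  rcases Nat.lt_or_ge (k + 1) n with hk | hk
  · rw [Nat.mod_eq_of_lt hk]
  · rw [show (k : ℕ) + 1 = n by omega, Nat.mod_self, hx]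

theorem exists_cycle_iff_mem_chainInvariants {n : ℕ} (hn : 1 < n) (z : ℂ) :
    (∃ ψ : Fin n → E, (∀ k, ‖ψ k‖ = 1) ∧ z = ∏ k : Fin n, ⟪ψ k, ψ (k + ⟨1, hn⟩)⟫_ℂ) ↔
      z ∈ chainInvariants E n 1 := by
  constructor
  · rintro ⟨ψ, hψ, rfl⟩
    set x : ℕ → E := fun k => ψ ⟨k % n, Nat.mod_lt _ (by omega)⟩
    have hψx : ψ = fun k : Fin n => x k :=
      funext fun k => congrArg ψ (Fin.ext (Nat.mod_eq_of_lt k.isLt).symm)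
    have hx : x n = x 0 := by simp [x]
    refine ⟨x, fun k => hψ _, ?_, ?_⟩
    · rw [hx]; exact inner_self_eq_one_of_norm_eq_one (hψ _)
    · rw [hψx]; exact prod_inner_fin_eq_prod_range hn hx
  · rintro ⟨x, hx, hx₀, rfl⟩
    have hxn : x n = x 0 := ((inner_eq_one_iff_of_norm_eq_one (hx 0) (hx n)).mp hx₀).symm
    exact ⟨fun k : Fin n => x k, fun k => hx k, (prod_inner_fin_eq_prod_range hn hxn).symm⟩

end Bargmann

open Bargmann in
/-- For `n ≥ 3` and `d ≥ 2`, the set `ℬ_n(d)` of `n`th-order Bargmann invariants of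
`n`-tuples of unit vectors in `ℂ^d` coincides with `ℬ_n(2)`, the corresponding set for
qubit pure states. -/
theorem bargmann_set_dim_independent {n d : ℕ} (hn : 3 ≤ n) (hd : 2 ≤ d) :
    {z : ℂ | ∃ ψ : Fin n → EuclideanSpace ℂ (Fin d),
        (∀ k, ‖ψ k‖ = 1) ∧
        z = ∏ k : Fin n, (inner ℂ (ψ k) (ψ (k + ⟨1, by omega⟩)) : ℂ)} =
      {z : ℂ | ∃ ψ : Fin n → EuclideanSpace ℂ (Fin 2),
        (∀ k, ‖ψ k‖ = 1) ∧
        z = ∏ k : Fin n, (inner ℂ (ψ k) (ψ (k + ⟨1, by omega⟩)) : ℂ)} := by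
  ext z
  simp only [Set.mem_ofPred_eq, exists_cycle_iff_mem_chainInvariants (by omega : 1 < n)]
  have h₂ : 2 ≤ finrank ℂ (EuclideanSpace ℂ (Fin 2)) := finrank_euclideanSpace_fin (𝕜 := ℂ) |>.ge
  have h_d : 2 ≤ finrank ℂ (EuclideanSpace ℂ (Fin d)) := by rwa [finrank_euclideanSpace_fin]
  exact ⟨fun h => chainInvariants_subset h₂ (by omega) 1 h,
    fun h => chainInvariants_subset h_d (by omega) 1 h⟩
end

section
/- Let Ψ = (ψ₁,…,ψ_N) and Φ = (φ₁,…,φ_N) be two N-tuples of vectors in ℂ^d such that ⟪ψ_i,ψ_j⟫ ≠ 0 and ⟪φ_i,φ_j⟫ ≠ 0 for all i, j ∈ {1,…,N} (i.e., both frame graphs are complete). Then Ψ and Φ are jointly projectively unitarily equivalent if and only if all triple products agree: Δ_{ijk}(Ψ) = Δ_{ijk}(Φ) for all i, j, k ∈ {1,…,N}, where Δ_{ijk}(Ψ) = ⟪ψ_i,ψ_j⟫ ⟪ψ_j,ψ_k⟫ ⟪ψ_k,ψ_i⟫. -/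
/-!
Triple products are invariant under `ψ_k ↦ e^{iα_k} U ψ_k`, since the phases enter as
`e^{-iα_i} e^{iα_j} ⋯` and cancel around the cycle `i → j → k → i`.

Conversely, fix an index `z` with `⟪ψ_z, ψ_k⟫ ≠ 0` for all `k`. The triple products
`Δ_{zzz}` and `Δ_{zkz}` show that `‖ψ_z‖ = ‖φ_z‖` and `|⟪ψ_z, ψ_k⟫| = |⟪φ_z, φ_k⟫|`, so
`c_k = ⟪φ_z, φ_k⟫ / ⟪ψ_z, ψ_k⟫` is a phase, and `Δ_{zjk}` shows that the tuples `(c_k ψ_k)`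
and `(φ_k)` have the same Gram matrix. Tuples with the same Gram matrix differ by a unitary.
-/

/-- Two `N`-tuples of vectors in `ℂ^d` are jointly projectively unitarily equivalent
(there are a unitary `U` and phases `α_k` with `φ_k = e^{iα_k} U ψ_k`). -/
def JointProjUnitaryEquiv {N d : ℕ} (ψ φ : Fin N → EuclideanSpace ℂ (Fin d)) : Prop :=
  ∃ U : EuclideanSpace ℂ (Fin d) ≃ₗᵢ[ℂ] EuclideanSpace ℂ (Fin d), ∃ α : Fin N → ℝ,
    ∀ k, φ k = Complex.exp (α k * Complex.I) • U (ψ k)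

/-- The triple product `Δ_{ijk}(Ψ) = ⟪ψ_i,ψ_j⟫ ⟪ψ_j,ψ_k⟫ ⟪ψ_k,ψ_i⟫`. -/
noncomputable def tripleProduct {N d : ℕ} (ψ : Fin N → EuclideanSpace ℂ (Fin d))
    (i j k : Fin N) : ℂ :=
  (inner ℂ (ψ i) (ψ j) : ℂ) * (inner ℂ (ψ j) (ψ k) : ℂ) * (inner ℂ (ψ k) (ψ i) : ℂ)

open scoped ComplexConjugate InnerProductSpace

section GramMatrix

variable {𝕜 E : Type*} [RCLike 𝕜] [NormedAddCommGroup E] [InnerProductSpace 𝕜 E]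
  [FiniteDimensional 𝕜 E]

theorem LinearMap.exists_linearIsometryEquiv_apply_eq {F : Type*} [AddCommGroup F] [Module 𝕜 F]
    {M L : F →ₗ[𝕜] E} (h : ∀ a b, ⟪M a, M b⟫_𝕜 = ⟪L a, L b⟫_𝕜) :
    ∃ U : E ≃ₗᵢ[𝕜] E, ∀ a, U (M a) = L a := by
  have hker : LinearMap.ker M ≤ LinearMap.ker L := fun a ha => by
    rw [LinearMap.mem_ker] at ha ⊢
    rw [← inner_self_eq_zero (𝕜 := 𝕜), ← h, ha, inner_zero_left]
  let g : LinearMap.range M →ₗ[𝕜] E :=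
    (LinearMap.ker M).liftQ L hker ∘ₗ M.quotKerEquivRange.symm.toLinearMap
  have hg : ∀ a, g ⟨M a, LinearMap.mem_range_self M a⟩ = L a := fun a => by
    simp [g, M.quotKerEquivRange_symm_apply_image]
  have hg_inner : ∀ x y, ⟪g x, g y⟫_𝕜 = ⟪x, y⟫_𝕜 := by
    rintro ⟨_, a, rfl⟩ ⟨_, b, rfl⟩
    rw [hg, hg, ← h]
    rfl
  let V := (g.isometryOfInner hg_inner).extend
  refine ⟨V.toLinearIsometryEquiv rfl, fun a => ?_⟩
  rw [LinearIsometry.toLinearIsometryEquiv_apply, ← hg]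
  exact LinearIsometry.extend_apply _ ⟨M a, LinearMap.mem_range_self M a⟩

theorem exists_linearIsometryEquiv_apply_eq_of_inner_eq {ι : Type*} {v w : ι → E}
    (h : ∀ i j, ⟪v i, v j⟫_𝕜 = ⟪w i, w j⟫_𝕜) :
    ∃ U : E ≃ₗᵢ[𝕜] E, ∀ i, U (v i) = w i := by
  obtain ⟨U, hU⟩ := LinearMap.exists_linearIsometryEquiv_apply_eq
    (M := Finsupp.linearCombination 𝕜 v) (L := Finsupp.linearCombination 𝕜 w) fun a b => by
      simp [Finsupp.linearCombination_apply, Finsupp.sum_inner, Finsupp.inner_sum,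
        inner_smul_left, inner_smul_right, h]
  exact ⟨U, fun i => by simpa using hU (Finsupp.single i 1)⟩

end GramMatrix

section TripleProduct

variable {N d : ℕ} {ψ φ : Fin N → EuclideanSpace ℂ (Fin d)}

theorem tripleProduct_smul_of_norm_eq_one {c : Fin N → ℂ} (hc : ∀ k, ‖c k‖ = 1)
    (i j k : Fin N) : tripleProduct (fun l => c l • ψ l) i j k = tripleProduct ψ i j k := by
  have hcc : ∀ l, conj (c l) * c l = 1 := fun l => by simp [Complex.conj_mul', hc]
  calc tripleProduct (fun l => c l • ψ l) i j k
      = (conj (c i) * c i) * (conj (c j) * c j) * (conj (c k) * c k) * tripleProduct ψ i j k := by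
        simp only [tripleProduct, inner_smul_left, inner_smul_right]
        ring
    _ = tripleProduct ψ i j k := by simp [hcc]

theorem tripleProduct_linearIsometryEquiv
    (U : EuclideanSpace ℂ (Fin d) ≃ₗᵢ[ℂ] EuclideanSpace ℂ (Fin d)) (i j k : Fin N) : tripleProduct (fun l => U (ψ l)) i j k = tripleProduct ψ i j k := by
  simp [tripleProduct]

theorem JointProjUnitaryEquiv.tripleProduct_eq (h : JointProjUnitaryEquiv ψ φ) (i j k : Fin N) :
    tripleProduct ψ i j k = tripleProduct φ i j k := by
  obtain ⟨U, α, hφ⟩ := h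
  obtain rfl : φ = fun l => Complex.exp (α l * Complex.I) • U (ψ l) := funext hφ
  rw [tripleProduct_smul_of_norm_eq_one (fun l => Complex.norm_exp_ofReal_mul_I (α l)),
    tripleProduct_linearIsometryEquiv]

theorem inner_self_eq_of_tripleProduct_eq {i : Fin N}
    (h : tripleProduct ψ i i i = tripleProduct φ i i i) : ⟪ψ i, ψ i⟫_ℂ = ⟪φ i, φ i⟫_ℂ := by
  simp only [tripleProduct, inner_self_eq_norm_sq_to_K] at h ⊢
  have h6 : (‖ψ i‖ : ℂ) ^ 6 = (‖φ i‖ : ℂ) ^ 6 := by linear_combination h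
  norm_cast at h6
  rw [(pow_left_inj₀ (norm_nonneg _) (norm_nonneg _) (by norm_num)).mp h6]

theorem inner_mul_inner_swap_eq_of_tripleProduct_eq
    (h : ∀ i j k, tripleProduct ψ i j k = tripleProduct φ i j k) {z : Fin N}
    (hz : ⟪ψ z, ψ z⟫_ℂ ≠ 0) (k : Fin N) :
    ⟪ψ z, ψ k⟫_ℂ * ⟪ψ k, ψ z⟫_ℂ = ⟪φ z, φ k⟫_ℂ * ⟪φ k, φ z⟫_ℂ := by
  have hzkz := h z k z
  rw [tripleProduct, tripleProduct, ← inner_self_eq_of_tripleProduct_eq (h z z z)] at hzkz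
  exact mul_right_cancel₀ hz hzkz

theorem exists_norm_eq_one_inner_smul_eq_of_tripleProduct_eq
    (h : ∀ i j k, tripleProduct ψ i j k = tripleProduct φ i j k) {z : Fin N}
    (hz : ∀ k, ⟪ψ z, ψ k⟫_ℂ ≠ 0) :
    ∃ c : Fin N → ℂ, (∀ k, ‖c k‖ = 1) ∧ ∀ j k, ⟪c j • ψ j, c k • ψ k⟫_ℂ = ⟪φ j, φ k⟫_ℂ := by
  have hswap := inner_mul_inner_swap_eq_of_tripleProduct_eq h (hz z)
  have hz' : ∀ k, ⟪ψ k, ψ z⟫_ℂ ≠ 0 := fun k => by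
    rw [← inner_conj_symm]
    exact (map_ne_zero _).mpr (hz k)
  refine ⟨fun k => ⟪φ z, φ k⟫_ℂ / ⟪ψ z, ψ k⟫_ℂ, fun k => ?_, fun j k => ?_⟩
  · have hsq : (‖⟪ψ z, ψ k⟫_ℂ‖ : ℂ) ^ 2 = (‖⟪φ z, φ k⟫_ℂ‖ : ℂ) ^ 2 := by
      simpa only [← Complex.mul_conj', inner_conj_symm] using hswap k
    norm_cast at hsq
    rw [norm_div, ← (pow_left_inj₀ (norm_nonneg _) (norm_nonneg _) two_ne_zero).mp hsq,
      div_self (norm_ne_zero_iff.mpr (hz k))]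
  · have hzjk := h z j k
    simp only [tripleProduct] at hzjk
    have key : ⟪φ j, φ z⟫_ℂ * ⟪φ z, φ k⟫_ℂ * ⟪ψ j, ψ k⟫_ℂ
        = ⟪φ j, φ k⟫_ℂ * (⟪ψ j, ψ z⟫_ℂ * ⟪ψ z, ψ k⟫_ℂ) := by
      refine mul_right_cancel₀ (mul_ne_zero (hz j) (hz' k)) ?_
      linear_combination ⟪φ j, φ z⟫_ℂ * ⟪φ z, φ k⟫_ℂ * hzjk
        - ⟪φ j, φ k⟫_ℂ * ⟪ψ z, ψ k⟫_ℂ * ⟪ψ k, ψ z⟫_ℂ * hswap j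
        - ⟪φ j, φ k⟫_ℂ * ⟪φ z, φ j⟫_ℂ * ⟪φ j, φ z⟫_ℂ * hswap k
    simp only [inner_smul_left, inner_smul_right, map_div₀, inner_conj_symm]
    field_simp [hz' j, hz k]
    linear_combination key

theorem jointProjUnitaryEquiv_of_inner_smul_eq
    {c : Fin N → ℂ} (hc : ∀ k, ‖c k‖ = 1) (h : ∀ j k, ⟪c j • ψ j, c k • ψ k⟫_ℂ = ⟪φ j, φ k⟫_ℂ) :
    JointProjUnitaryEquiv ψ φ := by
  obtain ⟨U, hU⟩ := exists_linearIsometryEquiv_apply_eq_of_inner_eq h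
  refine ⟨U, fun k => (c k).arg, fun k => ?_⟩
  have hexp : Complex.exp ((c k).arg * Complex.I) = c k := by
    simpa [hc k] using Complex.norm_mul_exp_arg_mul_I (c k)
  rw [hexp, ← hU, map_smul]

end TripleProduct

theorem jointProjUnitaryEquiv_iff_tripleProducts_general {N d : ℕ}
    (ψ φ : Fin N → EuclideanSpace ℂ (Fin d))
    (hψ : ∀ i j, (inner ℂ (ψ i) (ψ j) : ℂ) ≠ 0) :
    JointProjUnitaryEquiv ψ φ ↔
      ∀ i j k, tripleProduct ψ i j k = tripleProduct φ i j k := by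
  refine ⟨JointProjUnitaryEquiv.tripleProduct_eq, fun h => ?_⟩
  rcases isEmpty_or_nonempty (Fin N) with _ | ⟨⟨z⟩⟩
  · exact ⟨LinearIsometryEquiv.refl ℂ _, 0, isEmptyElim⟩
  · obtain ⟨c, hc, hcψ⟩ := exists_norm_eq_one_inner_smul_eq_of_tripleProduct_eq h (hψ z)
    exact jointProjUnitaryEquiv_of_inner_smul_eq hc hcψ

/-- If all pairwise inner products of `Ψ` and of `Φ` are nonzero (complete frame graphs),
then `Ψ` and `Φ` are jointly projectively unitarily equivalent iff all their triple
products agree. -/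
theorem jointProjUnitaryEquiv_iff_tripleProducts {N d : ℕ}
    (ψ φ : Fin N → EuclideanSpace ℂ (Fin d))
    (hψ : ∀ i j, (inner ℂ (ψ i) (ψ j) : ℂ) ≠ 0)
    (hφ : ∀ i j, (inner ℂ (φ i) (φ j) : ℂ) ≠ 0) :
    JointProjUnitaryEquiv ψ φ ↔
      ∀ i j k, tripleProduct ψ i j k = tripleProduct φ i j k :=
  jointProjUnitaryEquiv_iff_tripleProducts_general ψ φ hψ
end

section
/- Let Ψ = (ψ₁,…,ψ_N) and Φ = (φ₁,…,φ_N) be two N-tuples of vectors in ℂ^d. Then Ψ and Φ are jointly projectively unitarily equivalent if and only if all their n-products agree: Δ_{i₁,…,iₙ}(Ψ) = Δ_{i₁,…,iₙ}(Φ) for every n with 1 ≤ n ≤ N and every sequence i₁,…,iₙ ∈ {1,…,N}, where Δ_{i₁,…,iₙ}(Ψ) = ⟪ψ_{i₁},ψ_{i₂}⟫ ⟪ψ_{i₂},ψ_{i₃}⟫ ⋯ ⟪ψ_{i_{n−1}},ψ_{iₙ}⟫ ⟪ψ_{iₙ},ψ_{i₁}⟫. -/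
namespace NProdAux

variable {α : Type*}

/-- product of `f` over consecutive pairs of a list -/
def wprod (f : α → α → ℂ) : List α → ℂ
  | [] => 1
  | [_] => 1
  | a :: b :: t => f a b * wprod f (b :: t)

@[simp] lemma wprod_nil (f : α → α → ℂ) : wprod f ([] : List α) = 1 := rfl
@[simp] lemma wprod_single (f : α → α → ℂ) (a : α) : wprod f [a] = 1 := rfl
lemma wprod_cons_cons (f : α → α → ℂ) (a b : α) (t : List α) :
    wprod f (a :: b :: t) = f a b * wprod f (b :: t) := rfl

lemma wprod_master (f : α → α → ℂ) (u : List α) (a : α) (v : List α) :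
    wprod f (u ++ a :: v) = wprod f (u ++ [a]) * wprod f (a :: v) := by
  induction u with
  | nil => simp
  | cons x u ih =>
    cases u with
    | nil => simp [wprod_cons_cons]
    | cons y u' =>
      simp only [List.cons_append, wprod_cons_cons] at ih ⊢
      rw [ih]; ring

lemma wprod_reverse (f : α → α → ℂ) (l : List α) :
    wprod f l.reverse = wprod (fun a b => f b a) l := by
  induction l with
  | nil => simp
  | cons a t ih =>
    cases t with
    | nil => simp
    | cons b t' =>
      have h1 : (a :: b :: t').reverse = (b :: t').reverse ++ [a] := by simp
      have h2 : (b :: t').reverse = t'.reverse ++ [b] := by simp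
      rw [h1, h2, List.append_assoc, List.singleton_append,
        wprod_master f t'.reverse b [a], ← h2, ih, wprod_cons_cons]
      simp [wprod_cons_cons]; ring

lemma wprod_rot (f : α → α → ℂ) (a b : α) (u v : List α) :
    wprod f ((a :: u) ++ (b :: v) ++ [a]) = wprod f ((b :: v) ++ (a :: u) ++ [b]) := by
  have h1 : (a :: u) ++ (b :: v) ++ [a] = (a :: u) ++ b :: (v ++ [a]) := by simp
  have h2 : (b :: v) ++ (a :: u) ++ [b] = (b :: v) ++ a :: (u ++ [b]) := by simp
  rw [h1, h2, wprod_master f (a :: u) b (v ++ [a]), wprod_master f (b :: v) a (u ++ [b])]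
  simp only [← List.cons_append]
  ring

/-- wprod over `ofFn` as a `Fin` product of consecutive pairs -/
lemma wprod_ofFn (f : α → α → ℂ) : ∀ (n : ℕ) (v : Fin (n+1) → α),
    wprod f (List.ofFn v) = ∏ j : Fin n, f (v j.castSucc) (v j.succ) := by
  intro n
  induction n with
  | zero => intro v; simp [List.ofFn_succ]
  | succ n ih =>
    intro v
    set w : Fin (n+1) → α := fun i => v i.succ with hw
    rw [List.ofFn_succ, List.ofFn_succ (f := w), wprod_cons_cons, ← List.ofFn_succ (f := w),
      ih w, Fin.prod_univ_succ]
    refine congrArg₂ _ rfl (Finset.prod_congr rfl fun j _ => ?_)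
    simp only [hw, Fin.succ_castSucc]


/-- Conversion between the cyclic `Fin` product and `wprod` over `ofFn w ++ [w 0]`. -/
lemma finconv (f : α → α → ℂ) (m : ℕ) (w : Fin (m+1) → α) (h1 : 1 % (m+1) < m+1) :
    (∏ j : Fin (m+1), f (w j) (w (j + ⟨1 % (m+1), h1⟩))) =
      wprod f (List.ofFn w ++ [w 0]) := by
  have hsnoc : List.ofFn (Fin.snoc w (w 0) : Fin (m+2) → α) = List.ofFn w ++ [w 0] := by
    rw [List.ofFn_succ']
    simp [Fin.snoc_castSucc, Fin.snoc_last, List.concat_eq_append]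
  rw [← hsnoc, wprod_ofFn f (m+1) (Fin.snoc w (w 0)), Fin.prod_univ_castSucc,
    Fin.prod_univ_castSucc]
  refine congrArg₂ _ (Finset.prod_congr rfl fun j _ => ?_) ?_
  · have hm : 1 ≤ m := by have := j.2; omega
    have h1m : 1 % (m+1) = 1 := Nat.mod_eq_of_lt (by omega)
    have hadd : (j.castSucc : Fin (m+1)) + ⟨1 % (m+1), h1⟩ = j.succ := by
      apply Fin.ext
      simp [Fin.add_def, h1m, Nat.mod_eq_of_lt (show (j : ℕ) + 1 < m + 1 by omega)]
    rw [hadd, Fin.succ_castSucc, Fin.snoc_castSucc, Fin.snoc_castSucc]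
  · have hlast : (Fin.last m) + (⟨1 % (m+1), h1⟩ : Fin (m+1)) = 0 := by
      apply Fin.ext
      rcases Nat.eq_zero_or_pos m with hm | hm
      · subst hm; rfl
      · have h1m : 1 % (m+1) = 1 := Nat.mod_eq_of_lt (by omega)
        simp [Fin.add_def, h1m, Fin.last]
    rw [hlast, Fin.succ_last, Fin.snoc_last, Fin.snoc_castSucc]


lemma exists_dup_decomp (l : List α) (hl : ∃ j k : Fin l.length, j ≠ k ∧ l.get j = l.get k) :
    ∃ (x : α) (P Q R : List α), l = P ++ x :: (Q ++ x :: R) := by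
  obtain ⟨j, k, hne, he⟩ := hl
  wlog hjk : (j : ℕ) < (k : ℕ) generalizing j k
  · have hv : (j : ℕ) ≠ (k : ℕ) := fun h => hne (Fin.ext h)
    exact this k j (Ne.symm hne) he.symm (by omega)
  set tk := l.take k with htk
  have hklen : (k : ℕ) ≤ l.length := le_of_lt k.2
  have htklen : tk.length = k := by simp [htk, List.length_take, Nat.min_eq_left hklen]
  have hdec1 : l = tk ++ l.get k :: l.drop ((k : ℕ) + 1) := by
    conv_lhs => rw [← List.take_append_drop (k : ℕ) l]
    congr 1
    rw [List.get_eq_getElem, List.getElem_cons_drop]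
  have hj' : (j : ℕ) < tk.length := by omega
  have hdec2 : tk = tk.take j ++ tk.get ⟨j, hj'⟩ :: tk.drop ((j : ℕ) + 1) := by
    conv_lhs => rw [← List.take_append_drop (j : ℕ) tk]
    congr 1
    rw [List.get_eq_getElem, List.getElem_cons_drop]
  have hget : tk.get ⟨j, hj'⟩ = l.get j := by
    simp [htk, List.get_eq_getElem, List.getElem_take]
  refine ⟨l.get j, tk.take j, tk.drop ((j : ℕ) + 1), l.drop ((k : ℕ) + 1), ?_⟩
  conv_lhs => rw [hdec1, hdec2]
  rw [hget, ← he]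
  simp [List.append_assoc]


lemma key_cyc [Fintype α] (F G : α → α → ℂ)
    (Hsmall : ∀ (a : α) (t : List α), t.length + 1 ≤ Fintype.card α →
      wprod F (a :: (t ++ [a])) = wprod G (a :: (t ++ [a]))) :
    ∀ (n : ℕ) (a : α) (t : List α), t.length ≤ n →
      wprod F (a :: (t ++ [a])) = wprod G (a :: (t ++ [a])) := by
  intro n
  induction n with
  | zero =>
    intro a t ht
    have : t = [] := List.length_eq_zero_iff.mp (Nat.le_zero.mp ht)
    subst this
    exact Hsmall a [] (by have := Fintype.card_pos_iff.mpr ⟨a⟩; simp; omega)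
  | succ n ih =>
    intro a t ht
    by_cases hsm : t.length + 1 ≤ Fintype.card α
    · exact Hsmall a t hsm
    · have hcard : Fintype.card α < (a :: t).length := by simp; omega
      obtain ⟨j, k, hne, he⟩ := Fintype.exists_ne_map_eq_of_card_lt ((a :: t).get)
        (by simpa using hcard)
      obtain ⟨x, P, Q, R, hdec⟩ := exists_dup_decomp (a :: t) ⟨j, k, hne, he⟩
      cases P with
      | nil =>
        simp only [List.nil_append] at hdec
        injection hdec with h1 h2
        subst h2
        subst h1
        have hQ : Q.length ≤ n := by simp at ht; omega
        have hR : R.length ≤ n := by simp at ht; omega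
        have hsplit : ∀ f : α → α → ℂ, wprod f (a :: ((Q ++ a :: R) ++ [a])) =
            wprod f (a :: (Q ++ [a])) * wprod f (a :: (R ++ [a])) := by
          intro f
          have h1 : a :: ((Q ++ a :: R) ++ [a]) = (a :: Q) ++ a :: (R ++ [a]) := by simp
          rw [h1, wprod_master]
          simp [List.cons_append]
        rw [hsplit F, hsplit G, ih a Q hQ, ih a R hR]
      | cons a' P' =>
        injection hdec with h1 h2
        subst h2
        subst h1
        have hlen : P'.length + Q.length + R.length + 2 ≤ n + 1 := by simp at ht; omega
        have hQ : Q.length ≤ n := by omega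
        have hR : (R ++ a :: P').length ≤ n := by simp; omega
        have hsplit : ∀ f : α → α → ℂ,
            wprod f (a :: ((P' ++ x :: (Q ++ x :: R)) ++ [a])) =
            wprod f (x :: (Q ++ [x])) * wprod f (x :: ((R ++ a :: P') ++ [x])) := by
          intro f
          have h1 : a :: ((P' ++ x :: (Q ++ x :: R)) ++ [a]) =
              (a :: P') ++ (x :: (Q ++ x :: R)) ++ [a] := by simp
          rw [h1, wprod_rot]
          have h2 : (x :: (Q ++ x :: R)) ++ (a :: P') ++ [x] =
              (x :: Q) ++ x :: ((R ++ a :: P') ++ [x]) := by simp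
          rw [h2, wprod_master]
          simp [List.cons_append]
        simp only [List.append_eq]
        rw [hsplit F, hsplit G, ih x Q hQ, ih x (R ++ a :: P') hR]


section Walks

variable (A : α → α → Prop) (r : α → α → ℂ)

/-- There is a walk along `A`-edges from `a` to `b`. -/
def HasWalk (a b : α) : Prop := ∃ l : List α, List.IsChain A (a :: (l ++ [b]))

variable {A r}

lemma unimod (hr1 : ∀ i j, A i j → ‖r i j‖ = 1) :
    ∀ L : List α, List.IsChain A L → ‖wprod r L‖ = 1 := by
  intro L
  induction L with
  | nil => simp
  | cons a t ih =>
    cases t with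
    | nil => simp
    | cons b t' =>
      intro h
      rw [List.isChain_cons_cons] at h
      rw [wprod_cons_cons, norm_mul, hr1 a b h.1, ih h.2, one_mul]

lemma revinv (hr2 : ∀ i j, A i j → r i j * r j i = 1) :
    ∀ L : List α, List.IsChain A L → wprod r L.reverse * wprod r L = 1 := by
  intro L
  rw [wprod_reverse]
  induction L with
  | nil => simp
  | cons a t ih =>
    cases t with
    | nil => simp
    | cons b t' =>
      intro h
      rw [List.isChain_cons_cons] at h
      rw [wprod_cons_cons, wprod_cons_cons]
      have := ih h.2
      calc r b a * wprod (fun a b => r b a) (b :: t') * (r a b * wprod r (b :: t'))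
          = (r a b * r b a) * (wprod (fun a b => r b a) (b :: t') * wprod r (b :: t')) := by ring
        _ = 1 := by rw [hr2 a b h.1, this, one_mul]

lemma hasWalk_extend {a b c : α} (h : HasWalk A a b) (hbc : A b c) : HasWalk A a c := by
  obtain ⟨l, hl⟩ := h
  refine ⟨l ++ [b], ?_⟩
  have : a :: ((l ++ [b]) ++ [c]) = (a :: (l ++ [b])) ++ [c] := by simp
  rw [this, List.isChain_append]
  refine ⟨hl, List.isChain_singleton c, ?_⟩
  intro x hx y hy
  rw [show a :: (l ++ [b]) = (a :: l) ++ [b] by simp, List.getLast?_concat] at hx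
  simp at hx hy
  subst hx; subst hy; exact hbc

lemma rtg_to_walk {a b : α} (h : Relation.ReflTransGen A a b) :
    a = b ∨ HasWalk A a b := by
  induction h with
  | refl => exact Or.inl rfl
  | @tail b' c' hab hbc ih =>
    right
    rcases ih with rfl | hw
    · exact ⟨[], by simpa [List.isChain_pair] using hbc⟩
    · exact hasWalk_extend hw hbc

lemma wprod_extend {a b c : α} (l : List α) :
    wprod r (a :: ((l ++ [b]) ++ [c])) = wprod r (a :: (l ++ [b])) * r b c := by
  have h1 : a :: ((l ++ [b]) ++ [c]) = (a :: l) ++ b :: [c] := by simp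
  rw [h1, wprod_master]
  simp [wprod_cons_cons, List.cons_append]

lemma walk_indep (hsym : ∀ {i j}, A i j → A j i)
    (hr1 : ∀ i j, A i j → ‖r i j‖ = 1)
    (hr2 : ∀ i j, A i j → r i j * r j i = 1)
    (hone : ∀ (a : α) (l : List α), List.IsChain A (a :: (l ++ [a])) →
      wprod r (a :: (l ++ [a])) = 1)
    {a b : α} (l l' : List α) (hl : List.IsChain A (a :: (l ++ [b])))
    (hl' : List.IsChain A (a :: (l' ++ [b]))) :
    wprod r (a :: (l ++ [b])) = wprod r (a :: (l' ++ [b])) := by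
  set p := a :: (l ++ [b]) with hp
  set q := a :: (l' ++ [b]) with hq
  have hqrev : q.reverse = b :: (l'.reverse ++ [a]) := by simp [hq]
  have hqrevchain : List.IsChain A q.reverse := by
    rw [List.isChain_reverse]
    exact hl'.imp fun x y h => hsym h
  set l₂ := l'.reverse ++ [a] with hl₂
  have hclosed : List.IsChain A (p ++ l₂) := by
    rw [List.isChain_append]
    refine ⟨hl, ?_, ?_⟩
    · rw [hqrev] at hqrevchain
      exact hqrevchain.tail
    · intro x hx y hy
      rw [hp] at hx
      have : (a :: (l ++ [b])).getLast? = some b := by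
        rw [show a :: (l ++ [b]) = (a :: l) ++ [b] by simp, List.getLast?_concat]
      rw [this] at hx
      simp at hx
      subst hx
      rw [hqrev] at hqrevchain
      rw [List.isChain_cons] at hqrevchain
      exact hqrevchain.1 y hy
  have hform : p ++ l₂ = a :: ((l ++ b :: l'.reverse) ++ [a]) := by simp [hp, hl₂]
  have honeval : wprod r (p ++ l₂) = 1 := by
    rw [hform]
    exact hone a (l ++ b :: l'.reverse) (hform ▸ hclosed)
  have hsplitval : wprod r (p ++ l₂) = wprod r p * wprod r q.reverse := by
    have h2 : p ++ l₂ = (a :: l) ++ b :: l₂ := by simp [hp]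
    rw [h2, wprod_master, hqrev]
    rfl
  have hXY : wprod r p * wprod r q.reverse = 1 := by rw [← hsplitval, honeval]
  have hYZ : wprod r q.reverse * wprod r q = 1 := revinv hr2 q hl'
  calc wprod r p = wprod r p * (wprod r q.reverse * wprod r q) := by rw [hYZ, mul_one]
    _ = (wprod r p * wprod r q.reverse) * wprod r q := by ring
    _ = wprod r q := by rw [hXY, one_mul]

lemma exists_phase (hsym : ∀ {i j}, A i j → A j i)
    (hr1 : ∀ i j, A i j → ‖r i j‖ = 1)
    (hone : ∀ (a : α) (l : List α), List.IsChain A (a :: (l ++ [a])) →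
      wprod r (a :: (l ++ [a])) = 1) :
    ∃ c : α → ℂ, (∀ i, ‖c i‖ = 1) ∧
      ∀ i j, A i j → (starRingEnd ℂ) (c i) * c j = r i j := by
  classical
  have hr2 : ∀ i j, A i j → r i j * r j i = 1 := by
    intro i j h
    have := hone i [j] (by simp [List.isChain_cons_cons, List.isChain_pair, h, hsym h])
    simpa [wprod_cons_cons] using this
  letI S : Setoid α := ⟨Relation.ReflTransGen A,
    ⟨fun _ => Relation.ReflTransGen.refl,
     fun h => by haveI : Std.Symm A := ⟨fun _ _ hab => hsym hab⟩; exact Std.Symm.symm _ _ h,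
     fun h h' => Relation.ReflTransGen.trans h h'⟩⟩
  let rep : α → α := fun i => (⟦i⟧ : Quotient S).out
  have hrep1 : ∀ i, Relation.ReflTransGen A (rep i) i := fun i => Quotient.mk_out i
  have hrep2 : ∀ i j, A i j → rep i = rep j := fun i j h =>
    congrArg Quotient.out (Quotient.sound (Relation.ReflTransGen.single h))
  let pp : α → α → ℂ := fun a b =>
    if h : HasWalk A a b then wprod r (a :: (h.choose ++ [b])) else 1
  have ppval : ∀ (a b : α) (l : List α), List.IsChain A (a :: (l ++ [b])) →
      pp a b = wprod r (a :: (l ++ [b])) := by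
    intro a b l hl
    have hw : HasWalk A a b := ⟨l, hl⟩
    simp only [pp, dif_pos hw]
    exact walk_indep hsym hr1 hr2 hone _ _ hw.choose_spec hl
  have ppabs : ∀ a b, ‖pp a b‖ = 1 := by
    intro a b
    simp only [pp]
    split
    · next h => exact unimod hr1 _ h.choose_spec
    · simp
  have pploop : ∀ a, pp a a = 1 := by
    intro a
    simp only [pp]
    split
    · next h => exact hone a h.choose h.choose_spec
    · rfl
  refine ⟨fun i => pp (rep i) i, fun i => ppabs _ _, ?_⟩
  intro i j hij
  show (starRingEnd ℂ) (pp (rep i) i) * pp (rep j) j = r i j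
  have hrr : rep i = rep j := hrep2 i j hij
  rcases rtg_to_walk (hrep1 i) with heq | ⟨l, hl⟩
  · have hci : pp (rep i) i = 1 := by rw [heq]; exact pploop i
    have hcj : pp (rep j) j = r i j := by
      rw [← hrr, heq]
      rw [ppval i j [] (by simpa [List.isChain_pair] using hij)]
      simp [wprod_cons_cons]
    rw [hci, hcj, map_one, one_mul]
  · have hci : pp (rep i) i = wprod r (rep i :: (l ++ [i])) := ppval _ _ l hl
    have hchain : List.IsChain A (rep i :: ((l ++ [i]) ++ [j])) := by
      have : rep i :: ((l ++ [i]) ++ [j]) = (rep i :: (l ++ [i])) ++ [j] := by simp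
      rw [this, List.isChain_append]
      refine ⟨hl, List.isChain_singleton j, ?_⟩
      intro x hx y hy
      rw [show rep i :: (l ++ [i]) = (rep i :: l) ++ [i] by simp, List.getLast?_concat] at hx
      simp at hx hy
      subst hx; subst hy; exact hij
    have hcj : pp (rep j) j = wprod r (rep i :: (l ++ [i])) * r i j := by
      rw [← hrr, ppval _ _ (l ++ [i]) hchain, wprod_extend]
    rw [hci, hcj]
    have habs := unimod hr1 _ hl
    have : (starRingEnd ℂ) (wprod r (rep i :: (l ++ [i]))) * wprod r (rep i :: (l ++ [i])) = 1 := by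
      rw [mul_comm, Complex.mul_conj]
      norm_cast
      rw [Complex.normSq_eq_norm_sq, habs, one_pow]
    calc (starRingEnd ℂ) (wprod r (rep i :: (l ++ [i]))) *
          (wprod r (rep i :: (l ++ [i])) * r i j)
        = ((starRingEnd ℂ) (wprod r (rep i :: (l ++ [i]))) *
            wprod r (rep i :: (l ++ [i]))) * r i j := by ring
      _ = r i j := by rw [this, one_mul]

end Walks


section Gram

open scoped ComplexInnerProductSpace in
/-- Two families with equal Gram matrices are related by a unitary. -/
lemma gram_unitary {N d : ℕ} (g h : Fin N → EuclideanSpace ℂ (Fin d))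
    (hgh : ∀ i j, (inner ℂ (g i) (g j) : ℂ) = inner ℂ (h i) (h j)) :
    ∃ U : EuclideanSpace ℂ (Fin d) ≃ₗᵢ[ℂ] EuclideanSpace ℂ (Fin d), ∀ i, U (g i) = h i := by
  classical
  let E := EuclideanSpace ℂ (Fin d)
  let lc : (Fin N → E) → ((Fin N → ℂ) →ₗ[ℂ] E) := fun v =>
    { toFun := fun a => ∑ i, a i • v i
      map_add' := by intro a b; simp [add_smul, Finset.sum_add_distrib]
      map_smul' := by intro m a; simp [smul_smul, Finset.smul_sum] }
  have lc_apply : ∀ (v : Fin N → E) (a : Fin N → ℂ), lc v a = ∑ i, a i • v i := fun _ _ => rfl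
  have hinner : ∀ (a b : Fin N → ℂ), (inner ℂ (lc g a) (lc g b) : ℂ) = inner ℂ (lc h a) (lc h b) := by
    intro a b
    simp only [E, lc_apply, sum_inner, inner_sum, inner_smul_left, inner_smul_right, hgh]
  have hnorm_eq : ∀ a : Fin N → ℂ, ‖lc g a‖ = ‖lc h a‖ := by
    intro a
    simp only [E] at hinner ⊢
    rw [norm_eq_sqrt_re_inner (𝕜 := ℂ), norm_eq_sqrt_re_inner (𝕜 := ℂ), hinner a a]
  have hker : LinearMap.ker (lc g) ≤ LinearMap.ker (lc h) := by
    intro a ha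
    rw [LinearMap.mem_ker] at ha ⊢
    rw [← norm_eq_zero, ← hnorm_eq, ha, norm_zero]
  let L0 : LinearMap.range (lc g) →ₗ[ℂ] E :=
    ((LinearMap.ker (lc g)).liftQ (lc h) hker) ∘ₗ
      ((lc g).quotKerEquivRange.symm : _ ≃ₗ[ℂ] _).toLinearMap
  have happ : ∀ a : Fin N → ℂ, L0 ⟨lc g a, LinearMap.mem_range_self _ a⟩ = lc h a := by
    intro a
    have h1 : (lc g).quotKerEquivRange.symm ⟨lc g a, LinearMap.mem_range_self _ a⟩ =
        Submodule.Quotient.mk a := by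
      rw [LinearEquiv.symm_apply_eq]
      refine Subtype.ext ?_
      rw [LinearMap.quotKerEquivRange_apply_mk]
    simp only [L0, LinearMap.coe_comp, Function.comp_apply, LinearEquiv.coe_coe, h1,
      Submodule.liftQ_apply]
  have hLnorm : ∀ x : LinearMap.range (lc g), ‖L0 x‖ = ‖x‖ := by
    rintro ⟨x, hx⟩
    obtain ⟨a, rfl⟩ := hx
    rw [happ a]
    have : ‖(⟨lc g a, LinearMap.mem_range_self _ a⟩ : LinearMap.range (lc g))‖ = ‖lc g a‖ := rfl
    rw [this, hnorm_eq]
  let L : LinearMap.range (lc g) →ₗᵢ[ℂ] E := ⟨L0, hLnorm⟩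
  let Lext : E →ₗᵢ[ℂ] E := L.extend
  have hsurj : Function.Surjective Lext := by
    have : Function.Injective Lext.toLinearMap := Lext.injective
    exact LinearMap.injective_iff_surjective.mp this
  refine ⟨LinearIsometryEquiv.ofSurjective Lext hsurj, fun i => ?_⟩
  have hg1 : lc g (Pi.single i 1) = g i := by
    rw [lc_apply]
    simp [Pi.single_apply, ite_smul]
  have hh1 : lc h (Pi.single i 1) = h i := by
    rw [lc_apply]
    simp [Pi.single_apply, ite_smul]
  have : (LinearIsometryEquiv.ofSurjective Lext hsurj) (g i) = Lext (g i) := by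
    rw [LinearIsometryEquiv.coe_ofSurjective]
  rw [this, ← hg1]
  have : lc g (Pi.single i 1) =
      ((⟨lc g (Pi.single i 1), LinearMap.mem_range_self _ _⟩ : LinearMap.range (lc g)) : E) := rfl
  rw [this, LinearIsometry.extend_apply]
  show L0 _ = h i
  rw [happ, hh1]

end Gram


section Ratio

open scoped ComplexInnerProductSpace

variable {β : Type*}

/-- ratio lemma : under adjacency chain, `wprod` of ratios equals ratio of `wprod`s -/
lemma wprod_ratio (F G : β → β → ℂ) :
    ∀ L : List β, List.IsChain (fun i j => G i j ≠ 0) L →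
      wprod G L ≠ 0 ∧ wprod (fun i j => F i j / G i j) L * wprod G L = wprod F L := by
  intro L
  induction L with
  | nil => simp
  | cons a t ih =>
    cases t with
    | nil => simp
    | cons b t' =>
      intro h
      rw [List.isChain_cons_cons] at h
      obtain ⟨ih1, ih2⟩ := ih h.2
      constructor
      · rw [wprod_cons_cons]
        exact mul_ne_zero h.1 ih1
      · rw [wprod_cons_cons, wprod_cons_cons, wprod_cons_cons, ← ih2]
        field_simp [h.1]

end Ratio

end NProdAux

open NProdAux in
/-- `Ψ` and `Φ` are jointly projectively unitarily equivalent iff all their `n`-products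
`Δ_{i₁,…,iₙ} = ⟪ψ_{i₁},ψ_{i₂}⟫ ⋯ ⟪ψ_{iₙ},ψ_{i₁}⟫` agree, for every `1 ≤ n ≤ N`
and every sequence of indices `i₁, …, iₙ ∈ {1, …, N}`. -/
theorem jointProjUnitaryEquiv_iff_nProducts {N d : ℕ}
    (ψ φ : Fin N → EuclideanSpace ℂ (Fin d)) :
    JointProjUnitaryEquiv ψ φ ↔
      ∀ n : ℕ, (hn1 : 1 ≤ n) → (hn2 : n ≤ N) → ∀ i : Fin n → Fin N,
        (∏ j : Fin n, (inner ℂ (ψ (i j)) (ψ (i (j + ⟨1 % n, Nat.mod_lt 1 (by omega)⟩))) : ℂ)) =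
          ∏ j : Fin n, (inner ℂ (φ (i j)) (φ (i (j + ⟨1 % n, Nat.mod_lt 1 (by omega)⟩))) : ℂ) := by
  classical
  constructor
  · rintro ⟨U, α, hU⟩ n hn1 hn2 w
    have hcpf : 1 % n < n := Nat.mod_lt 1 (by omega)
    set e : Fin N → ℂ := fun k => Complex.exp (α k * Complex.I) with he
    have he1 : ∀ k : Fin N, (starRingEnd ℂ) (e k) * e k = 1 := by
      intro k
      rw [mul_comm, Complex.mul_conj]
      norm_cast
      rw [Complex.normSq_eq_norm_sq, Complex.norm_exp_ofReal_mul_I]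
      norm_num
    have hφψ : ∀ i j : Fin N, (inner ℂ (φ i) (φ j) : ℂ) =
        (starRingEnd ℂ) (e i) * e j * inner ℂ (ψ i) (ψ j) := by
      intro i j
      rw [hU i, hU j, inner_smul_left, inner_smul_right, LinearIsometryEquiv.inner_map_map]
      ring
    have hphase : (∏ j : Fin n, ((starRingEnd ℂ) (e (w j)) * e (w (j + ⟨1 % n, hcpf⟩)))) = 1 := by
      rw [Finset.prod_mul_distrib]
      haveI : NeZero n := ⟨by omega⟩
      have h2 : (∏ j : Fin n, e (w (j + ⟨1 % n, hcpf⟩))) = ∏ j : Fin n, e (w j) :=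
        Fintype.prod_equiv (Equiv.addRight (⟨1 % n, hcpf⟩ : Fin n)) _ _ (fun j => rfl)
      rw [h2, ← Finset.prod_mul_distrib]
      exact Finset.prod_eq_one fun j _ => he1 (w j)
    have main : (∏ j : Fin n, (inner ℂ (ψ (w j)) (ψ (w (j + ⟨1 % n, hcpf⟩))) : ℂ)) =
        ∏ j : Fin n, (inner ℂ (φ (w j)) (φ (w (j + ⟨1 % n, hcpf⟩))) : ℂ) := by
      symm
      calc (∏ j : Fin n, (inner ℂ (φ (w j)) (φ (w (j + ⟨1 % n, hcpf⟩))) : ℂ))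
          = ∏ j : Fin n, ((starRingEnd ℂ) (e (w j)) * e (w (j + ⟨1 % n, hcpf⟩)) *
              (inner ℂ (ψ (w j)) (ψ (w (j + ⟨1 % n, hcpf⟩))) : ℂ)) :=
            Finset.prod_congr rfl fun j _ => hφψ _ _
        _ = (∏ j : Fin n, ((starRingEnd ℂ) (e (w j)) * e (w (j + ⟨1 % n, hcpf⟩)))) *
              ∏ j : Fin n, (inner ℂ (ψ (w j)) (ψ (w (j + ⟨1 % n, hcpf⟩))) : ℂ) :=
            Finset.prod_mul_distrib
        _ = ∏ j : Fin n, (inner ℂ (ψ (w j)) (ψ (w (j + ⟨1 % n, hcpf⟩))) : ℂ) := by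
            rw [hphase, one_mul]
    exact main
  · intro H
    have KEY : ∀ (a : Fin N) (t : List (Fin N)),
        wprod (fun i j => (inner ℂ (ψ i) (ψ j) : ℂ)) (a :: (t ++ [a])) =
        wprod (fun i j => (inner ℂ (φ i) (φ j) : ℂ)) (a :: (t ++ [a])) := by
      have Hsmall : ∀ (a : Fin N) (t : List (Fin N)), t.length + 1 ≤ Fintype.card (Fin N) →
          wprod (fun i j => (inner ℂ (ψ i) (ψ j) : ℂ)) (a :: (t ++ [a])) =
          wprod (fun i j => (inner ℂ (φ i) (φ j) : ℂ)) (a :: (t ++ [a])) := by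
        intro a t hlen
        have hcard : t.length + 1 ≤ N := by simpa using hlen
        have h1lt : 1 % (t.length + 1) < t.length + 1 := Nat.mod_lt 1 (Nat.succ_pos _)
        have hprod := H (t.length + 1) (by omega) hcard ((a :: t).get)
        have e1 := finconv (fun i j => (inner ℂ (ψ i) (ψ j) : ℂ)) t.length ((a :: t).get) h1lt
        have e2 := finconv (fun i j => (inner ℂ (φ i) (φ j) : ℂ)) t.length ((a :: t).get) h1lt
        have hlist : List.ofFn ((a :: t).get) ++ [(a :: t).get (0 : Fin (t.length + 1))] = a :: (t ++ [a]) := by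
          rw [List.ofFn_get]
          rfl
        rw [hlist] at e1 e2
        exact (e1.symm.trans hprod).trans e2
      exact fun a t => key_cyc _ _ Hsmall t.length a t le_rfl
    have habs : ∀ i j : Fin N, (inner ℂ (ψ i) (ψ j) : ℂ) * inner ℂ (ψ j) (ψ i) =
        (inner ℂ (φ i) (φ j) : ℂ) * inner ℂ (φ j) (φ i) := by
      intro i j
      have h := KEY i [j]
      simpa [wprod_cons_cons, mul_assoc] using h
    have habs2 : ∀ i j : Fin N, ‖(inner ℂ (ψ i) (ψ j) : ℂ)‖ =
        ‖(inner ℂ (φ i) (φ j) : ℂ)‖ := by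
      intro i j
      have h := habs i j
      rw [← inner_conj_symm (ψ j) (ψ i), ← inner_conj_symm (φ j) (φ i),
        Complex.mul_conj, Complex.mul_conj] at h
      have h' : Complex.normSq (inner ℂ (ψ i) (ψ j) : ℂ) =
          Complex.normSq (inner ℂ (φ i) (φ j) : ℂ) := by exact_mod_cast h
      rw [Complex.norm_def, Complex.norm_def, h']
    have hψ0 : ∀ i j : Fin N, (inner ℂ (φ i) (φ j) : ℂ) = 0 → (inner ℂ (ψ i) (ψ j) : ℂ) = 0 := by
      intro i j h0
      have := habs2 i j
      rw [h0, norm_zero, norm_eq_zero] at this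
      exact this
    have hsym : ∀ {i j : Fin N}, (inner ℂ (φ i) (φ j) : ℂ) ≠ 0 → (inner ℂ (φ j) (φ i) : ℂ) ≠ 0 := by
      intro i j h h0
      rw [← inner_conj_symm (φ j) (φ i), map_eq_zero] at h0
      exact h h0
    have hr1 : ∀ i j : Fin N, (inner ℂ (φ i) (φ j) : ℂ) ≠ 0 →
        ‖(inner ℂ (ψ i) (ψ j) : ℂ) / (inner ℂ (φ i) (φ j) : ℂ)‖ = 1 := by
      intro i j h
      rw [norm_div, habs2 i j, div_self]
      rwa [ne_eq, norm_eq_zero]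
    have hone : ∀ (a : Fin N) (l : List (Fin N)),
        List.IsChain (fun i j => (inner ℂ (φ i) (φ j) : ℂ) ≠ 0) (a :: (l ++ [a])) →
        wprod (fun i j => (inner ℂ (ψ i) (ψ j) : ℂ) / (inner ℂ (φ i) (φ j) : ℂ)) (a :: (l ++ [a])) = 1 := by
      intro a l hch
      obtain ⟨hne, heq⟩ := wprod_ratio (fun i j => (inner ℂ (ψ i) (ψ j) : ℂ))
        (fun i j => (inner ℂ (φ i) (φ j) : ℂ)) (a :: (l ++ [a])) hch
      rw [KEY a l] at heq
      exact mul_right_cancel₀ hne (by rwa [one_mul])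
    obtain ⟨c, hc1, hc2⟩ := exists_phase (A := fun i j => (inner ℂ (φ i) (φ j) : ℂ) ≠ 0)
      (r := fun i j => (inner ℂ (ψ i) (ψ j) : ℂ) / (inner ℂ (φ i) (φ j) : ℂ))
      (fun {i j} h => hsym h) hr1 hone
    have hGram : ∀ i j : Fin N, (inner ℂ (ψ i) (ψ j) : ℂ) = inner ℂ (c i • φ i) (c j • φ j) := by
      intro i j
      rw [inner_smul_left, inner_smul_right]
      by_cases hA : (inner ℂ (φ i) (φ j) : ℂ) ≠ 0
      · have := hc2 i j hA
        rw [← mul_assoc, this, div_mul_cancel₀ _ hA]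
      · rw [not_not] at hA
        rw [hA, hψ0 i j hA, mul_zero, mul_zero]
    obtain ⟨U, hUψ⟩ := gram_unitary ψ (fun i => c i • φ i) hGram
    refine ⟨U, fun k => Complex.arg ((c k)⁻¹), fun k => ?_⟩
    rw [hUψ k]
    have hck : c k ≠ 0 := by
      intro h0
      have := hc1 k
      rw [h0, norm_zero] at this
      norm_num at this
    have hexp : Complex.exp (↑(Complex.arg ((c k)⁻¹)) * Complex.I) = (c k)⁻¹ := by
      have h := Complex.norm_mul_exp_arg_mul_I ((c k)⁻¹)
      rwa [norm_inv, hc1 k, inv_one, Complex.ofReal_one, one_mul] at h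
    rw [hexp, smul_smul, inv_mul_cancel₀ hck, one_smul]
end

section
/- For every integer n ≥ 1 there exist polynomials p and q with rational coefficients in the n² variables {x_{ij} : 1 ≤ i, j ≤ n} such that for every n-tuple ρ₁,…,ρₙ of density matrices on ℂ², the complex number z = Tr(ρ₁ ρ₂ ⋯ ρₙ) satisfies the quadratic equation z² − 2 p(Δ) z + q(Δ) = 0, where p(Δ) and q(Δ) denote the evaluations of p and q at x_{ij} = Tr(ρ_i ρ_j). In particular, the nth-order Bargmann invariant of qubit states is determined, up to complex conjugation, by the second-order Bargmann invariants Tr(ρ_i ρ_j). -/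
/-!
Write `ρₖ = 1/2 + mₖ` with `mₖ` traceless. For traceless `2 × 2` matrices Cayley–Hamilton gives
`2 MNP = tr(NP) M - tr(MP) N + tr(MN) P + tr(MNP) 1`, so every trace of a word in the `mₖ` lies in
the algebra generated by the pair traces `tr(mᵢ mⱼ)` (polynomials in the `tr(ρᵢ ρⱼ)`) and the triple
traces `tr(mᵢ mⱼ mₖ)`. A product of two triple traces is `-1/2` times a `3 × 3` Gram determinant of
pair traces, so that algebra is `R + R·{triple traces}` with `R` the pair-trace polynomials, and
every element `z = r + w` of it satisfies `(z - r)² = w² ∈ R`. Running this argument for the generic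
trace-one matrices, over the ring of functions on trace-one families, makes `p` and `q` uniform.
-/

open scoped ComplexOrder

def IsDensityMatrix2 (ρ : Matrix (Fin 2) (Fin 2) ℂ) : Prop :=
  ρ.PosSemidef ∧ ρ.trace = 1

open Matrix MvPolynomial

theorem inv_two_smul_two {A : Type*} [CommRing A] [Algebra ℚ A] : (2⁻¹ : ℚ) • (2 : A) = 1 := by
  rw [← mul_one (2 : A), two_mul, ← two_smul ℚ, smul_smul]
  norm_num

namespace Subalgebra

variable {K A : Type*} [CommRing K] [CommRing A] [Algebra K A]

theorem det_mem {n : Type*} [Fintype n] [DecidableEq n] (S : Subalgebra K A)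
    {M : Matrix n n A} (hM : ∀ i j, M i j ∈ S) : M.det ∈ S := by
  have hlift : S.val.mapMatrix (of fun i j => (⟨M i j, hM i j⟩ : S)) = M := rfl
  rw [← hlift, ← AlgHom.map_det]
  exact Subtype.property _

theorem mem_of_two_mul_mem [Algebra ℚ A] (S : Subalgebra ℚ A) {x : A} (h : 2 * x ∈ S) :
    x ∈ S := by
  have hx : x = (2⁻¹ : ℚ) • (2 * x) := by rw [← smul_mul_assoc, inv_two_smul_two, one_mul]
  exact hx ▸ S.smul_mem h _

open Submodule in
theorem exists_sq_sub_mem_of_mem_adjoin_union (R : Subalgebra K A) {T : Set A}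
    (hT : ∀ s ∈ T, ∀ t ∈ T, s * t ∈ R) {z : A} (hz : z ∈ Algebra.adjoin K (R ∪ T)) :
    ∃ r ∈ R, (z - r) ^ 2 ∈ R := by
  set P := Subalgebra.toSubmodule R
  set S := span K T
  have hPP : P * P = P := R.isIdempotentElem_toSubmodule
  have hSS : S * S ≤ P := by
    rw [span_mul_span, span_le]
    rintro _ ⟨s, hs, t, ht, rfl⟩
    exact hT s hs t ht
  have hPS : P * S * (P * S) ≤ P := by
    rw [mul_mul_mul_comm, hPP]
    exact (mul_le_mul_right hSS _).trans hPP.le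
  -- `R + R·span T` is closed under multiplication since `(span T)² ⊆ R`.
  have hN : (P ⊔ P * S) * (P ⊔ P * S) ≤ P ⊔ P * S := by
    simp only [Submodule.mul_sup, Submodule.sup_mul, sup_le_iff]
    refine ⟨⟨hPP.le.trans le_sup_left, ?_⟩, ?_, hPS.trans le_sup_left⟩
    · rw [mul_right_comm, hPP]
      exact le_sup_right
    · rw [← mul_assoc, hPP]
      exact le_sup_right
  have hzN : z ∈ P ⊔ P * S := by
    induction hz using Algebra.adjoin_induction with
    | mem x hx =>
      rcases hx with hx | hx
      · exact mem_sup_left hx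
      · have h1x := mul_mem_mul (show 1 ∈ P from R.one_mem) (subset_span (R := K) hx)
        exact mem_sup_right (by rwa [one_mul] at h1x)
    | algebraMap k => exact mem_sup_left (R.algebraMap_mem k)
    | add x y _ _ hx hy => exact add_mem hx hy
    | mul x y _ _ hx hy => exact hN (mul_mem_mul hx hy)
  obtain ⟨r, hr, w, hw, rfl⟩ := mem_sup.mp hzN
  exact ⟨r, hr, by rw [add_sub_cancel_left, sq]; exact hPS (mul_mem_mul hw hw)⟩

end Subalgebra

namespace Matrix

section TracelessFinTwo

variable {A : Type*} [CommRing A] {M N P : Matrix (Fin 2) (Fin 2) A}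

theorem apply_one_one_eq_neg_of_trace_eq_zero (hM : M.trace = 0) : M 1 1 = -M 0 0 := by
  rw [trace_fin_two] at hM
  linear_combination hM

theorem two_smul_mul_mul_of_trace_eq_zero (hM : M.trace = 0) (hN : N.trace = 0)
    (hP : P.trace = 0) :
    (2 : A) • (M * N * P) = (N * P).trace • M - (M * P).trace • N + (M * N).trace • P
      + (M * N * P).trace • (1 : Matrix (Fin 2) (Fin 2) A) := by
  ext i j
  fin_cases i <;> fin_cases j <;>
    simp [mul_apply, Fin.sum_univ_two, trace_fin_two, apply_one_one_eq_neg_of_trace_eq_zero, hM,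
      hN, hP] <;> ring

theorem two_mul_trace_mul_mul_mul_trace_mul_mul_of_trace_eq_zero
    {M N : Fin 3 → Matrix (Fin 2) (Fin 2) A} (hM : ∀ a, (M a).trace = 0)
    (hN : ∀ a, (N a).trace = 0) :
    2 * (M 0 * M 1 * M 2).trace * (N 0 * N 1 * N 2).trace =
      -det (of fun a b => (M a * N b).trace) := by
  simp [det_fin_three, trace_fin_two, mul_apply, Fin.sum_univ_two,
    apply_one_one_eq_neg_of_trace_eq_zero, hM, hN]
  ring

end TracelessFinTwo

theorem trace_prod_map_mem_of_trace_eq_zero {ι A : Type*} [CommRing A] [Algebra ℚ A]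
    (S : Subalgebra ℚ A) {m : ι → Matrix (Fin 2) (Fin 2) A} (hm : ∀ i, (m i).trace = 0)
    (hpair : ∀ i j, (m i * m j).trace ∈ S) (htriple : ∀ i j k, (m i * m j * m k).trace ∈ S) :
    ∀ L : List ι, (L.map m).prod.trace ∈ S
  | [] => by simp
  | [a] => by simp [hm a]
  | [a, b] => by simpa using hpair a b
  | a :: b :: c :: L => by
    set W := (L.map m).prod
    have hW := trace_prod_map_mem_of_trace_eq_zero S hm hpair htriple L
    have ha := trace_prod_map_mem_of_trace_eq_zero S hm hpair htriple (a :: L)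
    have hb := trace_prod_map_mem_of_trace_eq_zero S hm hpair htriple (b :: L)
    have hc := trace_prod_map_mem_of_trace_eq_zero S hm hpair htriple (c :: L)
    simp only [List.map_cons, List.prod_cons] at ha hb hc
    have hred := congrArg (fun X => (X * W).trace)
      (two_smul_mul_mul_of_trace_eq_zero (hm a) (hm b) (hm c))
    simp only [smul_mul, add_mul, sub_mul, one_mul, trace_add, trace_sub, trace_smul,
      smul_eq_mul] at hred
    apply S.mem_of_two_mul_mem
    simp only [List.map_cons, List.prod_cons, ← mul_assoc]
    rw [hred]
    exact add_mem (add_mem (sub_mem (mul_mem (hpair b c) ha) (mul_mem (hpair a c) hb))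
      (mul_mem (hpair a b) hc)) (mul_mem (htriple a b c) hW)
termination_by L => L.length

theorem trace_prod_map_add_smul_one_mem {ι n K A : Type*} [Fintype n] [DecidableEq n]
    [CommRing K] [CommRing A] [Algebra K A] (S : Subalgebra K A) {m : ι → Matrix n n A}
    (hm : ∀ L : List ι, (L.map m).prod.trace ∈ S) (c : K) (L : List ι) :
    (L.map fun i => m i + c • 1).prod.trace ∈ S := by
  suffices h : ∀ L' : List ι, ((L'.map m).prod * (L.map fun i => m i + c • 1).prod).trace ∈ S by
    simpa using h []
  induction L with
  | nil => simpa using hm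
  | cons a L ih =>
    intro L'
    have hsplit : (L'.map m).prod * ((a :: L).map fun i => m i + c • 1).prod =
        ((L' ++ [a]).map m).prod * (L.map fun i => m i + c • 1).prod +
          c • ((L'.map m).prod * (L.map fun i => m i + c • 1).prod) := by
      simp [mul_add, add_mul, mul_assoc]
    rw [hsplit, trace_add, trace_smul]
    exact add_mem (ih _) (S.smul_mem (ih L') c)

theorem exists_trace_prod_sq_sub_two_mul_add_eq_zero {ι A : Type*} [CommRing A] [Algebra ℚ A]
    {ρ : ι → Matrix (Fin 2) (Fin 2) A} (hρ : ∀ i, (ρ i).trace = 1) (L : List ι) :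
    ∃ p q : MvPolynomial (ι × ι) ℚ,
      (L.map ρ).prod.trace ^ 2
        - 2 * aeval (fun ij : ι × ι => (ρ ij.1 * ρ ij.2).trace) p * (L.map ρ).prod.trace
        + aeval (fun ij : ι × ι => (ρ ij.1 * ρ ij.2).trace) q = 0 := by
  set g := aeval (R := ℚ) fun ij : ι × ι => (ρ ij.1 * ρ ij.2).trace
  set m : ι → Matrix (Fin 2) (Fin 2) A := fun i => ρ i - (2⁻¹ : ℚ) • 1
  have hm : ∀ i, (m i).trace = 0 := fun i => by simp [m, hρ i, inv_two_smul_two]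
  have hpair : ∀ i j, (m i * m j).trace ∈ g.range := fun i j =>
    ⟨X (i, j) - C 2⁻¹, by
      simp [g, m, sub_mul, mul_sub, hρ, inv_two_smul_two, Algebra.algebraMap_eq_smul_one]⟩
  set T := Set.range fun t : Fin 3 → ι => (m (t 0) * m (t 1) * m (t 2)).trace
  have hT : ∀ s ∈ T, ∀ t ∈ T, s * t ∈ g.range := by
    rintro _ ⟨s, rfl⟩ _ ⟨t, rfl⟩
    apply Subalgebra.mem_of_two_mul_mem
    rw [← mul_assoc, two_mul_trace_mul_mul_mul_trace_mul_mul_of_trace_eq_zero (fun _ => hm _)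
      (fun _ => hm _)]
    exact neg_mem (Subalgebra.det_mem _ fun a b => hpair _ _)
  set S := Algebra.adjoin ℚ (g.range ∪ T)
  have hmS : ∀ L : List ι, (L.map m).prod.trace ∈ S :=
    trace_prod_map_mem_of_trace_eq_zero S hm
      (fun i j => Algebra.subset_adjoin (Or.inl (hpair i j)))
      (fun i j k => Algebra.subset_adjoin (Or.inr ⟨![i, j, k], rfl⟩))
  have hz : (L.map ρ).prod.trace ∈ S := by
    simpa [m] using trace_prod_map_add_smul_one_mem S hmS (2⁻¹ : ℚ) L
  obtain ⟨_, ⟨p, rfl⟩, q, hq⟩ := Subalgebra.exists_sq_sub_mem_of_mem_adjoin_union g.range hT hz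
  refine ⟨p, p ^ 2 - q, ?_⟩
  rw [map_sub, map_pow]
  linear_combination (-1 : A) * hq

end Matrix

section Generic

variable {n : ℕ}

abbrev TraceOneFamily (n : ℕ) := {ρ : Fin n → Matrix (Fin 2) (Fin 2) ℂ // ∀ k, (ρ k).trace = 1}

def genericMatrix (k : Fin n) : Matrix (Fin 2) (Fin 2) (TraceOneFamily n → ℂ) :=
  of fun i j σ => σ.1 k i j

theorem trace_genericMatrix (k : Fin n) : (genericMatrix k).trace = 1 :=
  funext fun σ => σ.2 k

theorem trace_prod_genericMatrix_apply (σ : TraceOneFamily n) (L : List (Fin n)) :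
    (L.map genericMatrix).prod.trace σ = (L.map σ.1).prod.trace := by
  have h := AddMonoidHom.map_trace (Pi.evalAlgHom ℚ (fun _ => ℂ) σ) (L.map genericMatrix).prod
  rwa [← AlgHom.mapMatrix_apply, map_list_prod, List.map_map] at h

theorem trace_genericMatrix_mul_apply (σ : TraceOneFamily n) (i j : Fin n) :
    (genericMatrix i * genericMatrix j).trace σ = (σ.1 i * σ.1 j).trace := by
  simpa using trace_prod_genericMatrix_apply σ [i, j]

end Generic

theorem qubit_bargmann_quadratic_from_second_order_general (n : ℕ) :
    ∃ p q : MvPolynomial (Fin n × Fin n) ℚ,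
      ∀ ρ : Fin n → Matrix (Fin 2) (Fin 2) ℂ, (∀ k, IsDensityMatrix2 (ρ k)) →
        ∀ z : ℂ, z = Matrix.trace (List.prod (List.ofFn fun j : Fin n => ρ j)) →
          z ^ 2 -
            2 * (MvPolynomial.aeval (fun ij : Fin n × Fin n =>
              Matrix.trace (ρ ij.1 * ρ ij.2)) p) * z +
            (MvPolynomial.aeval (fun ij : Fin n × Fin n =>
              Matrix.trace (ρ ij.1 * ρ ij.2)) q) = 0 := by
  obtain ⟨p, q, h⟩ :=
    exists_trace_prod_sq_sub_two_mul_add_eq_zero trace_genericMatrix (List.finRange n)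
  refine ⟨p, q, fun ρ hρ z hz => ?_⟩
  have h_eval := congrArg (Pi.evalAlgHom ℚ (fun _ => ℂ) ⟨ρ, fun k => (hρ k).2⟩) h
  simp only [map_add, map_sub, map_mul, map_pow, map_ofNat, map_zero, comp_aeval_apply,
    Pi.evalAlgHom_apply, trace_prod_genericMatrix_apply, trace_genericMatrix_mul_apply] at h_eval
  rwa [hz, List.ofFn_eq_map]

/-- For every `n ≥ 1`, there are polynomials `p, q` with rational coefficients in the
variables `x_{ij}` (`1 ≤ i,j ≤ n`) such that for every `n`-tuple of qubit density matrices
`ρ₁, …, ρₙ`, the `n`th-order Bargmann invariant `z = Tr(ρ₁ ⋯ ρₙ)` satisfies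
`z² - 2 p(Δ) z + q(Δ) = 0`, where `p(Δ), q(Δ)` are evaluations at `x_{ij} = Tr(ρ_i ρ_j)`.
Hence the `n`th-order Bargmann invariant of qubit states is determined, up to complex
conjugation, by the second-order invariants. -/
theorem qubit_bargmann_quadratic_from_second_order (n : ℕ) (hn : 1 ≤ n) :
    ∃ p q : MvPolynomial (Fin n × Fin n) ℚ,
      ∀ ρ : Fin n → Matrix (Fin 2) (Fin 2) ℂ, (∀ k, IsDensityMatrix2 (ρ k)) →
        ∀ z : ℂ, z = Matrix.trace (List.prod (List.ofFn fun j : Fin n => ρ j)) →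
          z ^ 2 -
            2 * (MvPolynomial.aeval (fun ij : Fin n × Fin n =>
              Matrix.trace (ρ ij.1 * ρ ij.2)) p) * z +
            (MvPolynomial.aeval (fun ij : Fin n × Fin n =>
              Matrix.trace (ρ ij.1 * ρ ij.2)) q) = 0 :=
  qubit_bargmann_quadratic_from_second_order_general n
end
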